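/- arXiv:0809.3821 — 11 statements merged into one kernel-verified Lean document; each statement's English description precedes it below -/
import Mathlib

section
/- If θ : ℝ → ℝ, x : ℝ → ℝ, z : ℝ → ℝ satisfy x'(s) = cos θ(s), z'(s) = sin θ(s), z(s) > 0, and the Weingarten relation a·z(s)·θ'(s) + (a+b)·cos θ(s) = c for all s, and if θ'(s₀) = 0 for some s₀ and a ≠ 0, then θ is constant, so the curve α(s) = (x(s), z(s)) is a straight line. -/
/-!
Along the curve, `c - (a + b) cos θ = a z θ'`, and differentiating the left side gives
`(a + b) sin θ θ' = ((a + b) sin θ / (a z)) · (a z θ')`. So `a z θ'` solves a scalar linear ODE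
with continuous coefficient; it vanishes at `s₀`, hence everywhere, and `θ' ≡ 0` since `a z ≠ 0`.
-/

open Real

theorem eq_zero_of_hasDerivAt_mul_self {g h : ℝ → ℝ} (hg : ∀ s, HasDerivAt g (h s * g s) s)
    (hh : Continuous h) {s₀ : ℝ} (h0 : g s₀ = 0) (s : ℝ) : g s = 0 := by
  set H : ℝ → ℝ := fun u => ∫ t in s₀..u, h t
  -- integrating factor: `g · exp (-H)` has derivative `h g e^{-H} - g h e^{-H} = 0`
  have hderiv : ∀ u, HasDerivAt (fun u => g u * exp (-H u)) 0 u := fun u => by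
    have hH : HasDerivAt H (h u) u := (hh.integral_hasStrictDerivAt s₀ u).hasDerivAt
    exact ((hg u).mul hH.neg.exp).congr_deriv (by ring)
  have hconst := is_const_of_deriv_eq_zero (fun u => (hderiv u).differentiableAt)
    (fun u => (hderiv u).deriv) s s₀
  simpa [h0, (exp_pos _).ne'] using hconst

theorem stmt0_general (a b c : ℝ) (θ z θd : ℝ → ℝ)
    (hz : ∀ s, HasDerivAt z (Real.sin (θ s)) s)
    (hθ : ∀ s, HasDerivAt θ (θd s) s)
    (hzpos : ∀ s, 0 < z s)
    (hW : ∀ s, a * z s * θd s + (a + b) * Real.cos (θ s) = c)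
    (ha : a ≠ 0) (s₀ : ℝ) (h0 : θd s₀ = 0) :
    ∀ s, θ s = θ s₀ := by
  have haz : ∀ s, a * z s ≠ 0 := fun s => mul_ne_zero ha (hzpos s).ne'
  have hcoeff : Continuous fun s => (a + b) * sin (θ s) / (a * z s) := by
    have hθc : Continuous θ := continuous_iff_continuousAt.2 fun s => (hθ s).continuousAt
    have hzc : Continuous z := continuous_iff_continuousAt.2 fun s => (hz s).continuousAt
    exact (continuous_const.mul (continuous_sin.comp hθc)).div (continuous_const.mul hzc) haz
  have hode : ∀ s, HasDerivAt (fun s => a * z s * θd s)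
      ((a + b) * sin (θ s) / (a * z s) * (a * z s * θd s)) s := fun s => by
    have hdefect : (fun s => a * z s * θd s) = fun s => c - (a + b) * cos (θ s) :=
      funext fun s => eq_sub_of_add_eq (hW s)
    rw [hdefect]
    refine (((hθ s).cos.const_mul (a + b)).const_sub c).congr_deriv ?_
    field_simp [ha, (hzpos s).ne']
  have hθd : ∀ s, θd s = 0 := fun s => by
    have hvanish := eq_zero_of_hasDerivAt_mul_self hode hcoeff (s₀ := s₀) (by simp [h0]) s
    simpa [haz s] using hvanish
  intro s
  exact is_const_of_deriv_eq_zero (fun t => (hθ t).differentiableAt)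
    (fun t => (hθd t ▸ hθ t).deriv) s s₀

/-- If the generating curve of a parabolic linear Weingarten surface
(`a κ₁ + b κ₂ = c`, i.e. `a z θ' + (a+b) cos θ = c`) has `θ'(s₀) = 0` at some
point and `a ≠ 0`, then `θ` is constant, so the curve is a straight line. -/
theorem stmt0 (a b c : ℝ) (θ x z θd : ℝ → ℝ)
    (hx : ∀ s, HasDerivAt x (Real.cos (θ s)) s)
    (hz : ∀ s, HasDerivAt z (Real.sin (θ s)) s)
    (hθ : ∀ s, HasDerivAt θ (θd s) s)
    (hzpos : ∀ s, 0 < z s)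
    (hW : ∀ s, a * z s * θd s + (a + b) * Real.cos (θ s) = c)
    (ha : a ≠ 0) (s₀ : ℝ) (h0 : θd s₀ = 0) :
    ∀ s, θ s = θ s₀ :=
  stmt0_general a b c θ z θd hz hθ hzpos hW ha s₀ h0
end

section
/- Let θ, x, z : ℝ → ℝ satisfy x' = cos θ, z' = sin θ, z > 0, and suppose κ₁(s) := z(s)θ'(s) + cos θ(s) is constant equal to c for all s. Then θ''(s) = 0 for all s, hence θ' is constant, so the planar curve α(s) = (x(s), z(s)) is a straight line (if θ' ≡ 0) or a Euclidean circle of curvature θ' (if θ' is a nonzero constant). -/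
open Real

/-- If the first principal curvature `κ₁ = z θ' + cos θ` of a parabolic surface
is constant, then `θ'' ≡ 0`, hence `θ'` is constant: the generating curve is a
straight line or a Euclidean circle of curvature `θ'`. -/
theorem stmt2 (c : ℝ) (θ x z θd θdd : ℝ → ℝ)
    (hx : ∀ s, HasDerivAt x (Real.cos (θ s)) s)
    (hz : ∀ s, HasDerivAt z (Real.sin (θ s)) s)
    (hθ : ∀ s, HasDerivAt θ (θd s) s)
    (hθd : ∀ s, HasDerivAt θd (θdd s) s)
    (hzpos : ∀ s, 0 < z s)
    (hκ₁ : ∀ s, z s * θd s + Real.cos (θ s) = c) :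
    (∀ s, θdd s = 0) ∧ (∀ s t, θd s = θd t) := by
  have hdd : ∀ s, θdd s = 0 := by
    intro s
    have hcos : HasDerivAt (fun t => Real.cos (θ t)) (-Real.sin (θ s) * θd s) s :=
      (Real.hasDerivAt_cos (θ s)).comp s (hθ s)
    have hprod : HasDerivAt (fun t => z t * θd t + Real.cos (θ t))
        (Real.sin (θ s) * θd s + z s * θdd s + (-Real.sin (θ s) * θd s)) s :=
      ((hz s).mul (hθd s)).add hcos
    have hconst : HasDerivAt (fun t => z t * θd t + Real.cos (θ t)) 0 s := by
      have : (fun t => z t * θd t + Real.cos (θ t)) = fun _ => c := funext hκ₁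
      rw [this]; exact hasDerivAt_const s c
    have := hprod.unique hconst
    have hz0 : z s * θdd s = 0 := by linarith
    have := (hzpos s).ne'
    exact (mul_eq_zero.mp hz0).resolve_left this
  refine ⟨hdd, fun s t => ?_⟩
  have : ∀ u, HasDerivAt θd 0 u := fun u => hdd u ▸ hθd u
  exact is_const_of_deriv_eq_zero (fun u => (this u).differentiableAt) (fun u => (this u).deriv) s t
end

section
/- Let θ, x, z solve x' = cos θ, z' = sin θ, z > 0, with θ' (s) = ((m−1) cos θ(s) + n)/z(s), initial conditions x(0)=0, z(0)=z₀>0, θ(0)=0. Then for all s in the domain, (n + cos θ(s))·z(s) = (2−m)·∫₀ˢ sin θ(t) cos θ(t) dt + (n+1)·z₀. -/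
open Real intervalIntegral

theorem hasDerivAt_add_cos_mul {m n θ' t : ℝ} {θ z : ℝ → ℝ}
    (hθ : HasDerivAt θ θ' t) (hz : HasDerivAt z (sin (θ t)) t)
    (hode : θ' * z t = (m - 1) * cos (θ t) + n) :
    HasDerivAt (fun u => (n + cos (θ u)) * z u) ((2 - m) * (sin (θ t) * cos (θ t))) t := by
  refine ((((hasDerivAt_cos (θ t)).comp t hθ).const_add n).mul hz).congr_deriv ?_
  simp only [Function.comp_apply]
  linear_combination (-sin (θ t)) * hode

theorem stmt4_general (m n z₀ : ℝ) (θ z θd : ℝ → ℝ)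
    (hz : ∀ s, HasDerivAt z (Real.sin (θ s)) s)
    (hθ : ∀ s, HasDerivAt θ (θd s) s)
    (hzpos : ∀ s, 0 < z s)
    (hode : ∀ s, θd s = ((m - 1) * Real.cos (θ s) + n) / z s)
    (hz0 : z 0 = z₀) (hθ0 : θ 0 = 0) :
    ∀ s, (n + Real.cos (θ s)) * z s =
      (2 - m) * (∫ t in (0 : ℝ)..s, Real.sin (θ t) * Real.cos (θ t)) +
        (n + 1) * z₀ := by
  intro s
  have hθc : Continuous θ := continuous_iff_continuousAt.2 fun t => (hθ t).continuousAt
  have hderiv t := hasDerivAt_add_cos_mul (hθ t) (hz t) <| by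
    rw [hode t, div_mul_cancel₀ _ (hzpos t).ne']
  have hint := integral_eq_sub_of_hasDerivAt (a := 0) (b := s) (fun t _ => hderiv t)
    (by apply Continuous.intervalIntegrable; fun_prop)
  rw [integral_const_mul, hθ0, hz0, cos_zero] at hint
  linarith

/-- First integral of the ODE for parabolic surfaces with `κ₁ = m κ₂ + n`:
`(n + cos θ(s)) z(s) = (2-m) ∫₀ˢ sin θ cos θ + (n+1) z₀`. -/
theorem stmt4 (m n z₀ : ℝ) (θ x z θd : ℝ → ℝ)
    (hx : ∀ s, HasDerivAt x (Real.cos (θ s)) s)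
    (hz : ∀ s, HasDerivAt z (Real.sin (θ s)) s)
    (hθ : ∀ s, HasDerivAt θ (θd s) s)
    (hzpos : ∀ s, 0 < z s)
    (hode : ∀ s, θd s = ((m - 1) * Real.cos (θ s) + n) / z s)
    (hx0 : x 0 = 0) (hz0 : z 0 = z₀) (hz₀ : 0 < z₀) (hθ0 : θ 0 = 0) :
    ∀ s, (n + Real.cos (θ s)) * z s =
      (2 - m) * (∫ t in (0 : ℝ)..s, Real.sin (θ t) * Real.cos (θ t)) +
        (n + 1) * z₀ :=
  stmt4_general m n z₀ θ z θd hz hθ hzpos hode hz0 hθ0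
end

section
/- Let θ, x, z solve x' = cos θ, z' = sin θ, z > 0, with θ'(s) = ((m−1) cos θ(s) + n)/z(s) and θ(0) = 0, where n ≥ 0 and n + m − 1 < 0. Then θ is strictly decreasing on its maximal interval of existence, cos θ(s) > 0 everywhere (so −π/2 < θ(s) < π/2), and z''(s) = θ'(s) cos θ(s) < 0, i.e. z is strictly concave. -/
open Real Set

/-- Case `n + m - 1 < 0`, `n ≥ 0`: along the generating curve of a parabolic
surface with `κ₁ = m κ₂ + n` and `θ(0) = 0`, the angle `θ` is strictly
decreasing, `cos θ > 0` (so `-π/2 < θ < π/2`) and `z'' = θ' cos θ < 0`, i.e.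
`z` is strictly concave. -/
theorem stmt5 (m n : ℝ) (θ x z θd : ℝ → ℝ) (I : Set ℝ)
    (hI : I.OrdConnected) (hI0 : (0 : ℝ) ∈ I)
    (hx : ∀ s ∈ I, HasDerivAt x (Real.cos (θ s)) s)
    (hz : ∀ s ∈ I, HasDerivAt z (Real.sin (θ s)) s)
    (hθ : ∀ s ∈ I, HasDerivAt θ (θd s) s)
    (hzpos : ∀ s ∈ I, 0 < z s)
    (hode : ∀ s ∈ I, θd s = ((m - 1) * Real.cos (θ s) + n) / z s)
    (hθ0 : θ 0 = 0) (hn : 0 ≤ n) (hmn : n + m - 1 < 0) :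
    StrictAntiOn θ I ∧
    (∀ s ∈ I, 0 < Real.cos (θ s) ∧ -(π / 2) < θ s ∧ θ s < π / 2) ∧
    (∀ s ∈ I, HasDerivAt (fun t => Real.sin (θ t)) (θd s * Real.cos (θ s)) s ∧
      θd s * Real.cos (θ s) < 0) := by
  have hm : m - 1 < 0 := by linarith
  set φ : ℝ → ℝ := fun t => ((m - 1) * Real.cos (θ t) + n) * z t ^ (m - 1) with hφdef
  -- φ has zero derivative on I
  have hφ : ∀ s ∈ I, HasDerivAt φ 0 s := by
    intro s hs
    have hz0 : z s ≠ 0 := (hzpos s hs).ne'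
    have hcosd : HasDerivAt (fun t => (m - 1) * Real.cos (θ t) + n)
        ((m - 1) * (-Real.sin (θ s) * θd s)) s := by
      exact (((Real.hasDerivAt_cos (θ s)).comp s (hθ s hs)).const_mul (m - 1)).add_const n
    have hpowd : HasDerivAt (fun t => z t ^ (m - 1))
        (Real.sin (θ s) * (m - 1) * z s ^ (m - 1 - 1)) s :=
      (hz s hs).rpow_const (Or.inl hz0)
    have hmul := hcosd.mul hpowd
    have hsub : z s ^ (m - 1) = z s ^ (m - 1 - 1) * z s := by
      rw [← Real.rpow_add_one hz0]; ring_nf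
    have hdz : θd s * z s = (m - 1) * Real.cos (θ s) + n := by
      rw [hode s hs]; field_simp
    have : (m - 1) * (-Real.sin (θ s) * θd s) * z s ^ (m - 1) +
        ((m - 1) * Real.cos (θ s) + n) * (Real.sin (θ s) * (m - 1) * z s ^ (m - 1 - 1)) = 0 := by
      rw [hsub, ← hdz]; ring
    rw [this] at hmul
    exact hmul
  -- φ is constant on I
  have hconst : ∀ s ∈ I, φ s = φ 0 := by
    intro s hs
    rcases le_total 0 s with h0s | hs0
    · have hsub : Icc (0 : ℝ) s ⊆ I := hI.out hI0 hs
      have := constant_of_has_deriv_right_zero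
        (f := φ) (a := 0) (b := s)
        (fun t ht => (hφ t (hsub ht)).continuousAt.continuousWithinAt)
        (fun t ht => (hφ t (hsub (Ico_subset_Icc_self ht))).hasDerivWithinAt)
      exact this s (right_mem_Icc.2 h0s)
    · have hsub : Icc s 0 ⊆ I := hI.out hs hI0
      have := constant_of_has_deriv_right_zero
        (f := φ) (a := s) (b := 0)
        (fun t ht => (hφ t (hsub ht)).continuousAt.continuousWithinAt)
        (fun t ht => (hφ t (hsub (Ico_subset_Icc_self ht))).hasDerivWithinAt)
      exact (this 0 (right_mem_Icc.2 hs0)).symm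
  -- key negativity: w s < 0
  have hφ0neg : φ 0 < 0 := by
    have hzp : (0:ℝ) < z 0 ^ (m - 1) := Real.rpow_pos_of_pos (hzpos 0 hI0) _
    have : (m - 1) * Real.cos (θ 0) + n < 0 := by
      rw [hθ0, Real.cos_zero]; linarith
    exact mul_neg_of_neg_of_pos this hzp
  have hwneg : ∀ s ∈ I, (m - 1) * Real.cos (θ s) + n < 0 := by
    intro s hs
    have hzp : (0:ℝ) < z s ^ (m - 1) := Real.rpow_pos_of_pos (hzpos s hs) _
    have h1 : ((m - 1) * Real.cos (θ s) + n) * z s ^ (m - 1) < 0 := by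
      show φ s < 0
      rw [hconst s hs]; exact hφ0neg
    nlinarith
  have hcos : ∀ s ∈ I, 0 < Real.cos (θ s) := by
    intro s hs
    by_contra h
    push_neg at h
    have := hwneg s hs
    nlinarith
  have hθdneg : ∀ s ∈ I, θd s < 0 := by
    intro s hs
    rw [hode s hs]
    exact div_neg_of_neg_of_pos (hwneg s hs) (hzpos s hs)
  refine ⟨?_, ?_, ?_⟩
  · -- strictly decreasing
    have hconv : Convex ℝ I := hI.convex
    refine strictAntiOn_of_deriv_neg hconv
      (fun t ht => (hθ t ht).continuousAt.continuousWithinAt) ?_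
    intro t ht
    have htI : t ∈ I := interior_subset ht
    rw [(hθ t htI).deriv]
    exact hθdneg t htI
  · intro s hs
    refine ⟨hcos s hs, ?_, ?_⟩
    · by_contra h
      push_neg at h
      have hsub : uIcc (0:ℝ) s ⊆ I := hI.uIcc_subset hI0 hs
      have hcont : ContinuousOn θ (uIcc 0 s) :=
        fun t ht => (hθ t (hsub ht)).continuousAt.continuousWithinAt
      have hmem : -(π/2) ∈ uIcc (θ 0) (θ s) := by
        rw [hθ0, Set.mem_uIcc]
        right
        constructor
        · exact h
        · have := Real.pi_pos; linarith
      obtain ⟨t, htm, htv⟩ := intermediate_value_uIcc hcont hmem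
      have := hcos t (hsub htm)
      rw [htv] at this
      simp [Real.cos_pi_div_two] at this
    · by_contra h
      push_neg at h
      have hsub : uIcc (0:ℝ) s ⊆ I := hI.uIcc_subset hI0 hs
      have hcont : ContinuousOn θ (uIcc 0 s) :=
        fun t ht => (hθ t (hsub ht)).continuousAt.continuousWithinAt
      have hmem : π/2 ∈ uIcc (θ 0) (θ s) := by
        rw [hθ0, Set.mem_uIcc]
        left
        constructor
        · have := Real.pi_pos; linarith
        · exact h
      obtain ⟨t, htm, htv⟩ := intermediate_value_uIcc hcont hmem
      have := hcos t (hsub htm)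
      rw [htv] at this
      simp at this
  · intro s hs
    have hd : HasDerivAt (fun t => Real.sin (θ t)) (Real.cos (θ s) * θd s) s :=
      (Real.hasDerivAt_sin (θ s)).comp s (hθ s hs)
    rw [mul_comm] at hd
    exact ⟨hd, mul_neg_of_neg_of_pos (hθdneg s hs) (hcos s hs)⟩
end

section
/- Let θ, x, z solve x' = cos θ, z' = sin θ, z > 0, with θ'(s) = ((m−1) cos θ(s) + n)/z(s), θ(0) = 0, z(0) = z₀, where n ≥ 0 and n + m − 1 < 0. Then the maximal positive time of existence s̄ is finite, and z(s) → 0 as s → s̄. -/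
/-!
The quantity `z ^ (m - 1) * (cos θ - n / (1 - m))` is a first integral of the system. It is
positive at `s = 0`, so `cos θ > n / (1 - m) ≥ 0` along the whole curve: hence
`θ' = ((m - 1) cos θ + n) / z < 0` and `θ` stays in `(-π/2, π/2)`. Past any `s₁ > 0` the height
then drops at rate at least `-sin θ(s₁) > 0`, and `z > 0` forces `s̄ < ∞`. On `(0, s̄)` the height
decreases to some `ℓ ≥ 0`. If `ℓ > 0`, the vector field is bounded and Lipschitz on the balls of
radius `ℓ / 2` around the trajectory, so Picard–Lindelöf, started close enough to `s̄`, extends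
the solution past `s̄`, against maximality.
-/

open Real Set Filter Topology
open Metric
open scoped NNReal

theorem IsLUB.notMem_of_isOpen {α : Type*} [LinearOrder α] [TopologicalSpace α] [OrderTopology α]
    [DenselyOrdered α] [NoMaxOrder α] {I : Set α} {a : α} (hI : IsOpen I) (h : IsLUB I a) :
    a ∉ I := fun ha ↦ by
  obtain ⟨u, hau, hu⟩ := exists_Ico_subset_of_mem_nhds (hI.mem_nhds ha) (exists_gt a)
  obtain ⟨c, hac, hcu⟩ := _root_.exists_between hau
  exact (h.1 (hu ⟨hac.le, hcu⟩)).not_gt hac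

theorem IsLUB.Ioo_subset {α : Type*} [LinearOrder α] {I : Set α} {a b : α} (h : IsLUB I b)
    (hI : I.OrdConnected) (ha : a ∈ I) : Ioo a b ⊆ I := fun t ht ↦ by
  obtain ⟨c, hc, htc, -⟩ := h.exists_between ht.2
  exact hI.out ha hc ⟨ht.1.le, htc.le⟩

theorem bddAbove_of_pos_of_deriv_le_neg {f f' : ℝ → ℝ} {I : Set ℝ} {s₁ κ : ℝ}
    (hI : I.OrdConnected) (hs₁ : s₁ ∈ I) (hκ : 0 < κ) (hf : ∀ s ∈ I, HasDerivAt f (f' s) s)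
    (hpos : ∀ s ∈ I, 0 < f s) (hf' : ∀ s ∈ I, s₁ ≤ s → f' s ≤ -κ) :
    BddAbove I := by
  refine ⟨s₁ + f s₁ / κ, fun s hs ↦ ?_⟩
  rcases le_or_gt s s₁ with hss₁ | hs₁s
  · linarith [div_pos (hpos s₁ hs₁) hκ]
  have hsub : Icc s₁ s ⊆ I := hI.out hs₁ hs
  have hdrop : f s - f s₁ ≤ -κ * (s - s₁) := by
    refine (convex_Icc s₁ s).image_sub_le_mul_sub_of_deriv_le
      (fun t ht ↦ (hf t (hsub ht)).continuousAt.continuousWithinAt)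
      (fun t ht ↦ (hf t (hsub (interior_subset ht))).differentiableAt.differentiableWithinAt)
      (fun t ht ↦ ?_) s₁ (left_mem_Icc.2 hs₁s.le) s (right_mem_Icc.2 hs₁s.le) hs₁s.le
    rw [interior_Icc] at ht
    rw [(hf t (hsub (Ioo_subset_Icc_self ht))).deriv]
    exact hf' t (hsub (Ioo_subset_Icc_self ht)) ht.1.le
  have : (s - s₁) * κ ≤ f s₁ := by linarith [hpos s hs]
  linarith [(le_div_iff₀ hκ).2 this]

theorem mem_Ioo_of_cos_pos {θ : ℝ → ℝ} {I : Set ℝ} {s₀ : ℝ} (hI : IsPreconnected I)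
    (hθ : ContinuousOn θ I) (hs₀ : s₀ ∈ I) (hθs₀ : θ s₀ = 0) (hcos : ∀ s ∈ I, 0 < cos (θ s)) :
    ∀ s ∈ I, θ s ∈ Ioo (-(π / 2)) (π / 2) := by
  have himage := hI.image θ hθ
  have hnot : ∀ y ∈ θ '' I, cos y ≠ 0 := by
    rintro _ ⟨s, hs, rfl⟩
    exact (hcos s hs).ne'
  intro s hs
  constructor
  · by_contra! h
    refine hnot _ (himage.Icc_subset (mem_image_of_mem θ hs) (mem_image_of_mem θ hs₀)
      ⟨h, by rw [hθs₀]; linarith [pi_pos]⟩) ?_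
    simp
  · by_contra! h
    refine hnot _ (himage.Icc_subset (mem_image_of_mem θ hs₀) (mem_image_of_mem θ hs)
      ⟨by rw [hθs₀]; linarith [pi_pos], h⟩) ?_
    simp

section PicardLindelof

variable {E : Type*} [NormedAddCommGroup E] [NormedSpace ℝ E] [CompleteSpace E]
  {v : E → E}

theorem IsPicardLindelof.exists_forall_mem_closedBall_hasDerivWithinAt
    {f : ℝ → E → E} {tmin tmax : ℝ} {t₀ : Icc tmin tmax} {x₀ : E} {a L K : ℝ≥0}
    (hf : IsPicardLindelof f t₀ x₀ a 0 L K) :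
    ∃ α : ℝ → E, α t₀ = x₀ ∧ (∀ t, α t ∈ closedBall x₀ a) ∧
      ∀ t ∈ Icc tmin tmax, HasDerivWithinAt α (f t (α t)) (Icc tmin tmax) t := by
  obtain ⟨α, hα⟩ := ODE.FunSpace.exists_isFixedPt_next hf (mem_closedBall_self le_rfl)
  have hball : ∀ t, α.compProj t ∈ closedBall x₀ a := fun _ ↦
    α.compProj_mem_closedBall hf.mul_max_le
  refine ⟨α.compProj, by rw [ODE.FunSpace.compProj_val, ← hα, ODE.FunSpace.next_apply₀],
    hball, fun t ht ↦ ?_⟩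
  refine ODE.hasDerivWithinAt_picard_Icc t₀.2 hf.continuousOn_uncurry
    α.continuous_compProj.continuousOn (fun _ _ ↦ hball _) x₀ ht |>.congr_of_mem
      (fun t' ht' ↦ ?_) ht
  nth_rw 1 [← hα]
  rw [ODE.FunSpace.compProj_of_mem ht', ODE.FunSpace.next_apply]

theorem exists_forall_mem_closedBall_hasDerivAt {x₀ : E} {K : ℝ≥0} {R L : ℝ} (hR : 0 < R)
    (hK : LipschitzOnWith K v (closedBall x₀ R)) (hL : ∀ p ∈ closedBall x₀ R, ‖v p‖ ≤ L)
    (t₀ : ℝ) :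
    ∃ f : ℝ → E, f t₀ = x₀ ∧ (∀ t, f t ∈ closedBall x₀ R) ∧
      ∀ t ∈ Ioo (t₀ - R / (L + 1)) (t₀ + R / (L + 1)), HasDerivAt f (v (f t)) t := by
  have hL₀ : 0 ≤ L := (norm_nonneg _).trans (hL x₀ (mem_closedBall_self hR.le))
  set δ := R / (L + 1)
  have hδ : 0 < δ := by positivity
  have hLδ : L * δ ≤ R := by
    rw [mul_div_assoc', div_le_iff₀ (by positivity)]
    nlinarith
  have hR' : ((R.toNNReal : ℝ≥0) : ℝ) = R := Real.coe_toNNReal _ hR.le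
  have hL' : ((L.toNNReal : ℝ≥0) : ℝ) = L := Real.coe_toNNReal _ hL₀
  have ht₀ : t₀ ∈ Icc (t₀ - δ) (t₀ + δ) := ⟨by linarith, by linarith⟩
  have hpl : IsPicardLindelof (fun _ ↦ v) ⟨t₀, ht₀⟩ x₀ R.toNNReal 0 L.toNNReal K :=
    { lipschitzOnWith := fun _ _ ↦ by rwa [hR']
      continuousOn := fun _ _ ↦ continuousOn_const
      norm_le := fun _ _ p hp ↦ by rw [hL']; exact hL p (by rwa [hR'] at hp)
      mul_max_le := by simpa [hR', hL'] using hLδ }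
  obtain ⟨f, hf₀, hfR, hf⟩ := hpl.exists_forall_mem_closedBall_hasDerivWithinAt
  exact ⟨f, hf₀, hR' ▸ hfR, fun t ht ↦
    (hf t (Ioo_subset_Icc_self ht)).hasDerivAt (Icc_mem_nhds ht.1 ht.2)⟩

end PicardLindelof

section Extension

variable {E : Type*} [NormedAddCommGroup E] [NormedSpace ℝ E] [ProperSpace E]
  {v : E → E} {U : Set E} {sol : ℝ → E} {a b R C : ℝ}

theorem exists_hasDerivAt_eqOn_Ico_of_forall_closedBall (hv : ContDiffOn ℝ 1 v U)
    (hab : a < b) (hR : 0 < R) (hsol : ∀ t ∈ Ioo a b, HasDerivAt sol (v (sol t)) t)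
    (hU : ∀ t ∈ Ioo a b, closedBall (sol t) R ⊆ U)
    (hC : ∀ t ∈ Ioo a b, ∀ p ∈ closedBall (sol t) R, ‖v p‖ ≤ C) :
    ∃ t₀ ∈ Ioo a b, ∃ b' > b, ∃ f : ℝ → E, EqOn f sol (Ico t₀ b) ∧
      ∀ t ∈ Ioo t₀ b', HasDerivAt f (v (f t)) t ∧ f t ∈ U := by
  obtain ⟨c, hc⟩ := nonempty_Ioo.2 hab
  have hC₀ : 0 ≤ C := (norm_nonneg _).trans (hC c hc _ (mem_closedBall_self hR.le))
  -- `δ` does not depend on the starting time, so starting within `δ / 2` of `b` overshoots `b`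
  set δ := R / (C + 1)
  have hδ : 0 < δ := by positivity
  have hCδ : C * δ ≤ R := by
    rw [mul_div_assoc', div_le_iff₀ (by positivity)]
    nlinarith
  set t₀ := max ((a + b) / 2) (b - δ / 2)
  have ht₀ : t₀ ∈ Ioo a b :=
    ⟨lt_max_of_lt_left (by linarith), max_lt (by linarith) (by linarith)⟩
  have hbδ : b < t₀ + δ := by linarith [le_max_right ((a + b) / 2) (b - δ / 2)]
  obtain ⟨K, hK⟩ := (hv.mono (hU t₀ ht₀)).exists_lipschitzOnWith one_ne_zero
    (convex_closedBall _ _) (isCompact_closedBall _ _)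
  obtain ⟨f, hf₀, hfR, hf⟩ := exists_forall_mem_closedBall_hasDerivAt hR hK (hC t₀ ht₀) t₀
  have hsolR : ∀ t ∈ Ico t₀ b, sol t ∈ closedBall (sol t₀) R := by
    intro t ht
    have hsub : Icc t₀ t ⊆ Ioo a b := Icc_subset_Ioo ht₀.1 ht.2
    rw [mem_closedBall, dist_eq_norm]
    calc ‖sol t - sol t₀‖ ≤ C * (t - t₀) :=
          norm_image_sub_le_of_norm_deriv_le_segment'
            (fun s hs ↦ (hsol s (hsub hs)).hasDerivWithinAt)
            (fun s hs ↦ hC s (hsub (Ico_subset_Icc_self hs)) _ (mem_closedBall_self hR.le))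
            t (right_mem_Icc.2 ht.1)
      _ ≤ C * δ := by gcongr; linarith [ht.2]
      _ ≤ R := hCδ
  refine ⟨t₀, ht₀, t₀ + δ, hbδ, f, fun t ht ↦ ?_, fun t ht ↦
    ⟨hf t ⟨by linarith [ht.1], ht.2⟩, hU t₀ ht₀ (hfR t)⟩⟩
  have hsub : Icc t₀ t ⊆ Ioo a b := Icc_subset_Ioo ht₀.1 ht.2
  have hsubδ : Icc t₀ t ⊆ Ioo (t₀ - δ) (t₀ + δ) :=
    Icc_subset_Ioo (by linarith) (by linarith [ht.2])
  exact ODE_solution_unique_of_mem_Icc_right (v := fun _ ↦ v) (f := f) (g := sol)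
    (s := fun _ ↦ closedBall (sol t₀) R) (fun _ _ ↦ hK)
    (fun s hs ↦ (hf s (hsubδ hs)).continuousAt.continuousWithinAt)
    (fun s hs ↦ (hf s (hsubδ (Ico_subset_Icc_self hs))).hasDerivWithinAt) (fun _ _ ↦ hfR _)
    (fun s hs ↦ (hsol s (hsub hs)).continuousAt.continuousWithinAt)
    (fun s hs ↦ (hsol s (hsub (Ico_subset_Icc_self hs))).hasDerivWithinAt)
    (fun s hs ↦ hsolR s ⟨hs.1, hs.2.trans_le ht.2.le⟩) hf₀ (right_mem_Icc.2 ht.1)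

theorem exists_hasDerivAt_extension_of_isLUB (hv : ContDiffOn ℝ 1 v U) {I : Set ℝ}
    (hI : I.OrdConnected) (hIopen : IsOpen I) (ha : a ∈ I) (hb : IsLUB I b) (hR : 0 < R)
    (hsol : ∀ t ∈ I, HasDerivAt sol (v (sol t)) t ∧ sol t ∈ U)
    (hU : ∀ t ∈ Ioo a b, closedBall (sol t) R ⊆ U)
    (hC : ∀ t ∈ Ioo a b, ∀ p ∈ closedBall (sol t) R, ‖v p‖ ≤ C) :
    ∃ J : Set ℝ, ∃ G : ℝ → E, J.OrdConnected ∧ IsOpen J ∧ I ⊆ J ∧ b ∈ J ∧ EqOn G sol I ∧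
      ∀ t ∈ J, HasDerivAt G (v (G t)) t ∧ G t ∈ U := by
  classical
  have hbI : b ∉ I := hb.notMem_of_isOpen hIopen
  have hab : a < b := (hb.1 ha).lt_of_ne (ne_of_mem_of_not_mem ha hbI)
  have hIoo : Ioo a b ⊆ I := hb.Ioo_subset hI ha
  obtain ⟨t₀, ht₀, b', hbb', f, hfsol, hf⟩ :=
    exists_hasDerivAt_eqOn_Ico_of_forall_closedBall hv hab hR
      (fun t ht ↦ (hsol t (hIoo ht)).1) hU hC
  have hc : (t₀ + b) / 2 ∈ I ∩ Ioo t₀ b' :=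
    ⟨hIoo ⟨by linarith [ht₀.1], by linarith [ht₀.2]⟩, by linarith [ht₀.2], by linarith [ht₀.2]⟩
  have hGf : EqOn (I.piecewise sol f) f (Ioo t₀ b') := fun t ht ↦ by
    by_cases htI : t ∈ I
    · rw [piecewise_eq_of_mem _ _ _ htI,
        hfsol ⟨ht.1.le, (hb.1 htI).lt_of_ne (ne_of_mem_of_not_mem htI hbI)⟩]
    · exact piecewise_eq_of_notMem _ _ _ htI
  refine ⟨I ∪ Ioo t₀ b', I.piecewise sol f,
    (hI.isPreconnected.union' ⟨_, hc⟩ isPreconnected_Ioo).ordConnected,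
    hIopen.union isOpen_Ioo, subset_union_left, Or.inr ⟨ht₀.2, hbb'⟩,
    fun t ht ↦ piecewise_eq_of_mem _ _ _ ht, ?_⟩
  rintro t (htI | htf)
  · have hG : I.piecewise sol f =ᶠ[𝓝 t] sol :=
      eventually_of_mem (hIopen.mem_nhds htI) fun s hs ↦ piecewise_eq_of_mem _ _ _ hs
    rw [hG.eq_of_nhds]
    exact ⟨(hsol t htI).1.congr_of_eventuallyEq hG, (hsol t htI).2⟩
  · have hG : I.piecewise sol f =ᶠ[𝓝 t] f := eventually_of_mem (isOpen_Ioo.mem_nhds htf) hGf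
    rw [hG.eq_of_nhds]
    exact ⟨(hf t htf).1.congr_of_eventuallyEq hG, (hf t htf).2⟩

end Extension

def IsGeneratingCurve (m n : ℝ) (θ x z θd : ℝ → ℝ) (J : Set ℝ) : Prop :=
  ∀ s ∈ J, HasDerivAt x (cos (θ s)) s ∧ HasDerivAt z (sin (θ s)) s ∧ HasDerivAt θ (θd s) s ∧
    0 < z s ∧ θd s = ((m - 1) * cos (θ s) + n) / z s

noncomputable def curveField (m n : ℝ) (p : ℝ × ℝ × ℝ) : ℝ × ℝ × ℝ :=
  (((m - 1) * cos p.1 + n) / p.2.2, cos p.1, sin p.1)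

section CurveField

variable {m n : ℝ}

theorem contDiffOn_curveField : ContDiffOn ℝ 1 (curveField m n) {p | 0 < p.2.2} := by
  refine ContDiffOn.prodMk ?_ (by fun_prop)
  exact ContDiffOn.div (by fun_prop) (by fun_prop) fun p hp ↦ hp.ne'

theorem norm_curveField_le {ℓ : ℝ} {p : ℝ × ℝ × ℝ} (hℓ : 0 < ℓ) (hp : ℓ ≤ p.2.2) :
    ‖curveField m n p‖ ≤ max ((|m - 1| + |n|) / ℓ) 1 := by
  have hnum : |(m - 1) * cos p.1 + n| ≤ |m - 1| + |n| := by
    grw [abs_add_le, abs_mul, abs_cos_le_one, mul_one]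
  have hfirst : |((m - 1) * cos p.1 + n) / p.2.2| ≤ (|m - 1| + |n|) / ℓ := by
    rw [abs_div, abs_of_pos (hℓ.trans_le hp)]
    exact div_le_div₀ (by positivity) hnum hℓ hp
  simp only [curveField, Prod.norm_def, Real.norm_eq_abs]
  exact max_le (hfirst.trans (le_max_left _ _))
    (max_le ((abs_cos_le_one _).trans (le_max_right _ _))
      ((abs_sin_le_one _).trans (le_max_right _ _)))

theorem isGeneratingCurve_of_hasDerivAt {G : ℝ → ℝ × ℝ × ℝ} {J : Set ℝ}
    (hG : ∀ s ∈ J, HasDerivAt G (curveField m n (G s)) s ∧ 0 < (G s).2.2) :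
    IsGeneratingCurve m n (fun t ↦ (G t).1) (fun t ↦ (G t).2.1) (fun t ↦ (G t).2.2)
      (fun t ↦ ((m - 1) * cos (G t).1 + n) / (G t).2.2) J := fun s hs ↦ by
  have hsnd := (ContinuousLinearMap.snd ℝ ℝ (ℝ × ℝ)).hasFDerivAt.comp_hasDerivAt s (hG s hs).1
  exact ⟨(ContinuousLinearMap.fst ℝ ℝ ℝ).hasFDerivAt.comp_hasDerivAt s hsnd,
    (ContinuousLinearMap.snd ℝ ℝ ℝ).hasFDerivAt.comp_hasDerivAt s hsnd,
    (ContinuousLinearMap.fst ℝ ℝ (ℝ × ℝ)).hasFDerivAt.comp_hasDerivAt s (hG s hs).1,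
    (hG s hs).2, rfl⟩

end CurveField

namespace IsGeneratingCurve

variable {m n : ℝ} {θ x z θd : ℝ → ℝ} {I : Set ℝ} {s : ℝ}

theorem hasDerivAt_theta (h : IsGeneratingCurve m n θ x z θd I) (hs : s ∈ I) :
    HasDerivAt θ (((m - 1) * cos (θ s) + n) / z s) s :=
  (h s hs).2.2.2.2 ▸ (h s hs).2.2.1

theorem continuousOn_theta (h : IsGeneratingCurve m n θ x z θd I) : ContinuousOn θ I :=
  fun s hs ↦ (h s hs).2.2.1.continuousAt.continuousWithinAt

theorem hasDerivAt_curveField (h : IsGeneratingCurve m n θ x z θd I) (hs : s ∈ I) :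
    HasDerivAt (fun t ↦ (θ t, x t, z t)) (curveField m n (θ s, x s, z s)) s :=
  (h.hasDerivAt_theta hs).prodMk ((h s hs).1.prodMk (h s hs).2.1)

theorem hasDerivAt_firstIntegral (h : IsGeneratingCurve m n θ x z θd I) (hm : m ≠ 1)
    (hs : s ∈ I) : HasDerivAt (fun t ↦ z t ^ (m - 1) * (cos (θ t) - n / (1 - m))) 0 s := by
  obtain ⟨-, hz, -, hzs, -⟩ := h s hs
  refine ((hz.rpow_const (p := m - 1) (Or.inl hzs.ne')).mul
    ((h.hasDerivAt_theta hs).cos.sub_const (n / (1 - m)))).congr_deriv ?_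
  rw [rpow_sub_one hzs.ne']
  field_simp
  ring

theorem div_lt_cos (h : IsGeneratingCurve m n θ x z θd I) (hI : IsPreconnected I)
    (hIopen : IsOpen I) (hI0 : 0 ∈ I) (hθ0 : θ 0 = 0) (hm : m < 1) (hmn : n + m - 1 < 0)
    (hs : s ∈ I) : n / (1 - m) < cos (θ s) := by
  have hconst := hIopen.is_const_of_deriv_eq_zero hI
    (fun t ht ↦ (h.hasDerivAt_firstIntegral hm.ne ht).differentiableAt.differentiableWithinAt)
    (fun t ht ↦ (h.hasDerivAt_firstIntegral hm.ne ht).deriv) hs hI0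
  have h0 : 0 < z 0 ^ (m - 1) * (cos (θ 0) - n / (1 - m)) := by
    rw [hθ0, cos_zero]
    exact mul_pos (rpow_pos_of_pos (h 0 hI0).2.2.2.1 _)
      (sub_pos.2 ((div_lt_one (by linarith)).2 (by linarith)))
  rw [← hconst] at h0
  linarith [pos_of_mul_pos_right h0 (rpow_nonneg (h s hs).2.2.2.1.le _)]

theorem strictAntiOn_theta (h : IsGeneratingCurve m n θ x z θd I) (hI : I.OrdConnected)
    (hIopen : IsOpen I) (hm : m < 1) (hcos : ∀ s ∈ I, n / (1 - m) < cos (θ s)) :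
    StrictAntiOn θ I := by
  refine strictAntiOn_of_deriv_neg hI.convex h.continuousOn_theta fun s hs ↦ ?_
  rw [hIopen.interior_eq] at hs
  rw [(h.hasDerivAt_theta hs).deriv]
  have := (div_lt_iff₀ (sub_pos.2 hm)).1 (hcos s hs)
  exact div_neg_of_neg_of_pos (by linarith) (h s hs).2.2.2.1

theorem bddAbove (h : IsGeneratingCurve m n θ x z θd I) (hI : I.OrdConnected)
    (hIopen : IsOpen I) (hI0 : 0 ∈ I) (hθ0 : θ 0 = 0) (hanti : StrictAntiOn θ I)
    (hrange : ∀ s ∈ I, θ s ∈ Ioo (-(π / 2)) (π / 2)) : BddAbove I := by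
  obtain ⟨u, hu, hIu⟩ := exists_Ico_subset_of_mem_nhds (hIopen.mem_nhds hI0) (exists_gt 0)
  have hs₁ : u / 2 ∈ I := hIu ⟨by positivity, by linarith⟩
  have hθs₁ : θ (u / 2) < 0 := hθ0 ▸ hanti hI0 hs₁ (by positivity)
  refine bddAbove_of_pos_of_deriv_le_neg hI hs₁
    (neg_pos.2 (sin_neg_of_neg_of_neg_pi_lt hθs₁ (by linarith [(hrange _ hs₁).1, pi_pos])))
    (fun s hs ↦ (h s hs).2.1) (fun s hs ↦ (h s hs).2.2.2.1) fun s hs hle ↦ ?_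
  rw [neg_neg]
  exact sin_le_sin_of_le_of_le_pi_div_two (hrange s hs).1.le (hrange _ hs₁).2.le
    (hanti.antitoneOn hs₁ hs hle)

theorem antitoneOn_z (h : IsGeneratingCurve m n θ x z θd I) (hI0 : 0 ∈ I) (hθ0 : θ 0 = 0)
    (hanti : StrictAntiOn θ I) (hrange : ∀ s ∈ I, θ s ∈ Ioo (-(π / 2)) (π / 2)) {b : ℝ}
    (hb : Ioo 0 b ⊆ I) : AntitoneOn z (Ioo 0 b) := by
  refine antitoneOn_of_deriv_nonpos (convex_Ioo 0 b)
    (fun s hs ↦ (h s (hb hs)).2.1.continuousAt.continuousWithinAt)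
    (fun s hs ↦ (h s (hb (interior_subset hs))).2.1.differentiableAt.differentiableWithinAt)
    fun s hs ↦ ?_
  rw [interior_Ioo] at hs
  have hθs : θ s < 0 := hθ0 ▸ hanti hI0 (hb hs) hs.1
  rw [(h s (hb hs)).2.1.deriv]
  exact (sin_neg_of_neg_of_neg_pi_lt hθs (by linarith [(hrange s (hb hs)).1, pi_pos])).le

theorem exists_extension (h : IsGeneratingCurve m n θ x z θd I) (hI : I.OrdConnected)
    (hIopen : IsOpen I) (hI0 : 0 ∈ I) {b ℓ : ℝ} (hb : IsLUB I b) (hℓ : 0 < ℓ)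
    (hzℓ : ∀ s ∈ Ioo 0 b, ℓ ≤ z s) :
    ∃ (J : Set ℝ) (θ₂ x₂ z₂ θd₂ : ℝ → ℝ), J.OrdConnected ∧ IsOpen J ∧ I ⊆ J ∧
      (∀ s ∈ I, θ₂ s = θ s ∧ x₂ s = x s ∧ z₂ s = z s) ∧
      IsGeneratingCurve m n θ₂ x₂ z₂ θd₂ J ∧ b ∈ J := by
  have hball : ∀ s ∈ Ioo 0 b, ∀ p ∈ closedBall (θ s, x s, z s) (ℓ / 2), ℓ / 2 ≤ p.2.2 := by
    intro s hs p hp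
    have hdist : dist p.2.2 (z s) ≤ dist p (θ s, x s, z s) :=
      (le_max_right _ _).trans (le_max_right _ _)
    linarith [(abs_le.1 ((Real.dist_eq _ _ ▸ hdist).trans (mem_closedBall.1 hp))).1, hzℓ s hs]
  obtain ⟨J, G, hJ, hJopen, hIJ, hbJ, hGI, hG⟩ := exists_hasDerivAt_extension_of_isLUB
    contDiffOn_curveField hI hIopen hI0 hb (half_pos hℓ)
    (fun s hs ↦ ⟨h.hasDerivAt_curveField hs, (h s hs).2.2.2.1⟩)
    (fun s hs p hp ↦ (half_pos hℓ).trans_le (hball s hs p hp))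
    (fun s hs p hp ↦ norm_curveField_le (half_pos hℓ) (hball s hs p hp))
  refine ⟨J, _, _, _, _, hJ, hJopen, hIJ, fun s hs ↦ ?_, isGeneratingCurve_of_hasDerivAt hG, hbJ⟩
  simp only [hGI hs, and_self]

end IsGeneratingCurve

theorem stmt6_general (m n : ℝ) (θ x z θd : ℝ → ℝ) (I : Set ℝ)
    (hI : I.OrdConnected) (hIopen : IsOpen I) (hI0 : (0 : ℝ) ∈ I)
    (hx : ∀ s ∈ I, HasDerivAt x (Real.cos (θ s)) s)
    (hz : ∀ s ∈ I, HasDerivAt z (Real.sin (θ s)) s)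
    (hθ : ∀ s ∈ I, HasDerivAt θ (θd s) s)
    (hzpos : ∀ s ∈ I, 0 < z s)
    (hode : ∀ s ∈ I, θd s = ((m - 1) * Real.cos (θ s) + n) / z s)
    (hθ0 : θ 0 = 0)
    (hn : 0 ≤ n) (hmn : n + m - 1 < 0)
    (hmax : ∀ (J : Set ℝ) (θ₂ x₂ z₂ θd₂ : ℝ → ℝ),
      J.OrdConnected → IsOpen J → I ⊆ J →
      (∀ s ∈ I, θ₂ s = θ s ∧ x₂ s = x s ∧ z₂ s = z s) →
      (∀ s ∈ J, HasDerivAt x₂ (Real.cos (θ₂ s)) s ∧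
        HasDerivAt z₂ (Real.sin (θ₂ s)) s ∧ HasDerivAt θ₂ (θd₂ s) s ∧
        0 < z₂ s ∧ θd₂ s = ((m - 1) * Real.cos (θ₂ s) + n) / z₂ s) →
      J ⊆ I) :
    ∃ sbar : ℝ, 0 < sbar ∧ IsLUB I sbar ∧
      Tendsto z (𝓝[<] sbar) (𝓝 0) := by
  have hsol : IsGeneratingCurve m n θ x z θd I := fun s hs ↦
    ⟨hx s hs, hz s hs, hθ s hs, hzpos s hs, hode s hs⟩
  have hm : m < 1 := by linarith
  have hcos : ∀ s ∈ I, n / (1 - m) < cos (θ s) := fun s hs ↦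
    hsol.div_lt_cos hI.isPreconnected hIopen hI0 hθ0 hm hmn hs
  have hanti := hsol.strictAntiOn_theta hI hIopen hm hcos
  have hrange := mem_Ioo_of_cos_pos hI.isPreconnected hsol.continuousOn_theta hI0 hθ0
    fun s hs ↦ (div_nonneg hn (by linarith)).trans_lt (hcos s hs)
  have hlub := isLUB_csSup ⟨0, hI0⟩ (hsol.bddAbove hI hIopen hI0 hθ0 hanti hrange)
  set sbar := sSup I
  have hsbar : sbar ∉ I := hlub.notMem_of_isOpen hIopen
  have hpos : 0 < sbar := (hlub.1 hI0).lt_of_ne (ne_of_mem_of_not_mem hI0 hsbar)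
  have hIoo : Ioo 0 sbar ⊆ I := hlub.Ioo_subset hI hI0
  have hbdd : 0 ∈ lowerBounds (z '' Ioo 0 sbar) := by
    rintro _ ⟨s, hs, rfl⟩
    exact (hzpos s (hIoo hs)).le
  have hlim := (hsol.antitoneOn_z hI0 hθ0 hanti hrange hIoo).tendsto_nhdsWithin_Ioo_left
    (nonempty_Ioo.2 hpos) ⟨0, hbdd⟩
  refine ⟨sbar, hpos, hlub, ?_⟩
  obtain hℓ | hℓ := (le_csInf ((nonempty_Ioo.2 hpos).image z) hbdd).eq_or_lt
  · exact hℓ ▸ hlim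
  obtain ⟨J, θ₂, x₂, z₂, θd₂, hJ, hJopen, hIJ, heq, hsolJ, hsbarJ⟩ :=
    hsol.exists_extension hI hIopen hI0 hlub hℓ fun s hs ↦
      csInf_le ⟨0, hbdd⟩ (mem_image_of_mem z hs)
  exact absurd (hmax J θ₂ x₂ z₂ θd₂ hJ hJopen hIJ heq hsolJ hsbarJ) hsbar

/-- Case `n + m - 1 < 0`, `n ≥ 0`: the maximal positive time of existence `s̄`
of the generating curve of a parabolic surface with `κ₁ = m κ₂ + n`,
`θ(0) = 0`, is finite, and `z(s) → 0` as `s → s̄`.  Maximality is expressed by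
the non-existence of a solution extending the given one to a strictly larger
order-connected domain. -/
theorem stmt6 (m n z₀ : ℝ) (θ x z θd : ℝ → ℝ) (I : Set ℝ)
    (hI : I.OrdConnected) (hIopen : IsOpen I) (hI0 : (0 : ℝ) ∈ I)
    (hx : ∀ s ∈ I, HasDerivAt x (Real.cos (θ s)) s)
    (hz : ∀ s ∈ I, HasDerivAt z (Real.sin (θ s)) s)
    (hθ : ∀ s ∈ I, HasDerivAt θ (θd s) s)
    (hzpos : ∀ s ∈ I, 0 < z s)
    (hode : ∀ s ∈ I, θd s = ((m - 1) * Real.cos (θ s) + n) / z s)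
    (hθ0 : θ 0 = 0) (hz0 : z 0 = z₀) (hz₀ : 0 < z₀)
    (hn : 0 ≤ n) (hmn : n + m - 1 < 0)
    (hmax : ∀ (J : Set ℝ) (θ₂ x₂ z₂ θd₂ : ℝ → ℝ),
      J.OrdConnected → IsOpen J → I ⊆ J →
      (∀ s ∈ I, θ₂ s = θ s ∧ x₂ s = x s ∧ z₂ s = z s) →
      (∀ s ∈ J, HasDerivAt x₂ (Real.cos (θ₂ s)) s ∧
        HasDerivAt z₂ (Real.sin (θ₂ s)) s ∧ HasDerivAt θ₂ (θd₂ s) s ∧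
        0 < z₂ s ∧ θd₂ s = ((m - 1) * Real.cos (θ₂ s) + n) / z₂ s) →
      J ⊆ I) :
    ∃ sbar : ℝ, 0 < sbar ∧ IsLUB I sbar ∧
      Tendsto z (𝓝[<] sbar) (𝓝 0) :=
  stmt6_general m n θ x z θd I hI hIopen hI0 hx hz hθ hzpos hode hθ0 hn hmn hmax
end

section
/- Let θ, x, z solve x' = cos θ, z' = sin θ, z > 0, with θ'(s) = ((m−1) cos θ(s) + n)/z(s), θ(0) = 0, n ≥ 0, m ≥ n+1 > 1, and n + m − 1 > 0. Then cos θ(s) ≠ −1 for all s, so −π < θ(s) < π on the whole domain; moreover z is increasing for s > 0 and the maximal interval of existence is all of ℝ. -/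
/-!
The function `g = (m - 1) cos θ + n = z θ'` satisfies the linear equation
`g' = -(m - 1) (sin θ / z) g`, so it never vanishes and keeps the sign of `g 0 = n + m - 1 > 0`.
As `m - 1 ≥ n`, this rules out `cos θ = -1`; hence `θ`, which increases from `θ 0 = 0`, stays in
`(-π, π)` and `z' = sin θ` has the sign of `s`, so `z ≥ z 0` on `I`.

With `z` bounded below, the solution is an integral curve of a globally Lipschitz bounded field
(`z` truncated below at `z 0 / 2`), which has a global integral curve `γ` extending the solution.
By maximality, `I` is the component through `0` of the open set where `γ` keeps `z > z 0 / 2`;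
as that set contains `closure I`, the interval `I` is closed as well as open, so `I = ℝ`.
-/

open Real Set Filter Topology
open scoped NNReal

section ODE

variable {E : Type*} [NormedAddCommGroup E] [NormedSpace ℝ E]

theorem HasDerivAt.fst {F : Type*} [NormedAddCommGroup F] [NormedSpace ℝ F] {f : ℝ → E × F}
    {f' : E × F} {t : ℝ} (h : HasDerivAt f f' t) : HasDerivAt (fun s => (f s).1) f'.1 t := by
  simpa using h.hasFDerivAt.fst.hasDerivAt

theorem HasDerivAt.snd {F : Type*} [NormedAddCommGroup F] [NormedSpace ℝ F] {f : ℝ → E × F}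
    {f' : E × F} {t : ℝ} (h : HasDerivAt f f' t) : HasDerivAt (fun s => (f s).2) f'.2 t := by
  simpa using h.hasFDerivAt.snd.hasDerivAt

theorem ODE_solution_unique_of_isPreconnected {v : ℝ → E → E} {f g : ℝ → E} {I : Set ℝ}
    {t₀ : ℝ} (hI : IsPreconnected I) (hIo : IsOpen I)
    (hv : ∀ t ∈ I, ∃ K, ∀ᶠ u in 𝓝 t, LipschitzWith K (v u))
    (hf : ∀ t ∈ I, HasDerivAt f (v t (f t)) t) (hg : ∀ t ∈ I, HasDerivAt g (v t (g t)) t)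
    (ht₀ : t₀ ∈ I) (heq : f t₀ = g t₀) : EqOn f g I := by
  have hloc : ∀ t ∈ I, f t = g t → f =ᶠ[𝓝 t] g := by
    intro t ht hfg
    obtain ⟨K, hK⟩ := hv t ht
    have hI : ∀ᶠ u in 𝓝 t, u ∈ I := hIo.mem_nhds ht
    exact ODE_solution_unique_of_eventually (s := fun _ => univ)
      (hK.mono fun _ hu => hu.lipschitzOnWith) (hI.mono fun u hu => ⟨hf u hu, trivial⟩)
      (hI.mono fun u hu => ⟨hg u hu, trivial⟩) hfg
  have hsub : I ⊆ {t | f =ᶠ[𝓝 t] g} := by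
    refine hI.subset_of_closure_inter_subset isOpen_setOfPred_eventually_nhds
      ⟨t₀, ht₀, hloc t₀ ht₀ heq⟩ ?_
    rintro t ⟨htc, ht⟩
    refine hloc t ht (tendsto_nhds_unique_of_frequently_eq (hf t ht).continuousAt
      (hg t ht).continuousAt ?_)
    exact (mem_closure_iff_frequently.1 htc).mono fun _ hu => hu.eq_of_nhds
  exact fun t ht => (hsub ht).eq_of_nhds

theorem exists_isIntegralCurve_of_lipschitzWith [CompleteSpace E] {W : E → E} {K : ℝ≥0} {L : ℝ}
    (hW : LipschitzWith K W) (hL : ∀ x, ‖W x‖ ≤ L) (t₀ : ℝ) (x₀ : E) :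
    ∃ γ : ℝ → E, γ t₀ = x₀ ∧ IsIntegralCurve γ fun _ => W := by
  have hloc : ∀ T : ℝ, ∃ γ : ℝ → E, γ 0 = x₀ ∧ ∀ t ∈ Ioo (-T) T, HasDerivAt γ (W (γ t)) t := by
    intro T
    have hPL : IsPicardLindelof (fun _ => W) (tmin := -|T|) (tmax := |T|) ⟨0, by simp⟩ x₀
        (L.toNNReal * Real.nnabs T) 0 L.toNNReal K :=
      .of_time_independent (fun x _ => (hL x).trans (Real.le_coe_toNNReal L))
        hW.lipschitzOnWith (by simp)
    obtain ⟨γ, hγ0, hγ⟩ := hPL.exists_eq_forall_mem_Icc_hasDerivWithinAt₀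
    refine ⟨γ, hγ0, fun t ht => ?_⟩
    have ht' : t ∈ Ioo (-|T|) |T| := Ioo_subset_Ioo (neg_le_neg (le_abs_self T)) (le_abs_self T) ht
    exact (hγ t (Ioo_subset_Icc_self ht')).hasDerivAt (Icc_mem_nhds ht'.1 ht'.2)
  choose γ hγ0 hγ using hloc
  have hagree : ∀ T T' t, |t| < T → |t| < T' → γ T t = γ T' t := by
    intro T T' t hT hT'
    have hsub : ∀ S, min T T' ≤ S → Ioo (-min T T') (min T T') ⊆ Ioo (-S) S :=
      fun S hS => Ioo_subset_Ioo (neg_le_neg hS) hS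
    refine ODE_solution_unique_of_mem_Ioo (s := fun _ => univ) (t₀ := 0)
      (fun _ _ => hW.lipschitzOnWith) ?_
      (fun u hu => ⟨hγ T u (hsub T (min_le_left _ _) hu), trivial⟩)
      (fun u hu => ⟨hγ T' u (hsub T' (min_le_right _ _) hu), trivial⟩)
      ((hγ0 T).trans (hγ0 T').symm) (abs_lt.1 (lt_min hT hT'))
    have := (abs_nonneg t).trans_lt (lt_min hT hT')
    exact ⟨neg_lt_zero.2 this, this⟩
  have hglobal : IsIntegralCurve (fun t => γ (|t| + 1) t) fun _ => W := by
    intro t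
    have ht : t ∈ Ioo (-(|t| + 1)) (|t| + 1) := abs_lt.1 (lt_add_one _)
    refine (hγ _ t ht).congr_of_eventuallyEq ?_
    filter_upwards [Ioo_mem_nhds ht.1 ht.2] with s hs
    exact hagree _ _ s (lt_add_one _) (abs_lt.2 hs)
  exact ⟨fun t => γ (|t - t₀| + 1) (t - t₀), by simpa using hγ0 (|0| + 1),
    fun t => (hglobal (t - t₀)).comp_sub_const t t₀⟩

end ODE

theorem pos_of_hasDerivAt_eq_mul {g c : ℝ → ℝ} {I : Set ℝ} {t₀ : ℝ} (hI : IsPreconnected I)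
    (hIo : IsOpen I) (hc : ContinuousOn c I) (hg : ∀ t ∈ I, HasDerivAt g (c t * g t) t)
    (ht₀ : t₀ ∈ I) (hpos : 0 < g t₀) : ∀ t ∈ I, 0 < g t := by
  intro t ht
  by_contra! hle
  obtain ⟨t₁, ht₁, hgt₁⟩ := hI.intermediate_value ht ht₀
    (fun s hs => (hg s hs).continuousAt.continuousWithinAt) ⟨hle, hpos.le⟩
  have hlip : ∀ s ∈ I, ∃ K, ∀ᶠ u in 𝓝 s, LipschitzWith K fun y => c u * y := by
    intro s hs
    refine ⟨‖c s‖₊ + 1, ?_⟩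
    filter_upwards [((hc.continuousAt (hIo.mem_nhds hs)).nnnorm).eventually_lt continuousAt_const
      (lt_add_one _)] with u hu
    exact (lipschitzWith_smul (c u)).weaken hu.le
  have hzero := ODE_solution_unique_of_isPreconnected (v := fun u y => c u * y) (g := fun _ => 0)
    hI hIo hlip hg (fun s _ => by simpa using hasDerivAt_const s (0 : ℝ)) ht₁ hgt₁ ht₀
  exact hpos.ne' hzero

theorem mem_Ioo_neg_pi_pi_of_cos_ne_neg_one {θ : ℝ → ℝ} {I : Set ℝ} {t₀ : ℝ}
    (hI : IsPreconnected I) (hθ : ContinuousOn θ I) (hcos : ∀ s ∈ I, cos (θ s) ≠ -1)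
    (ht₀ : t₀ ∈ I) (h₀ : θ t₀ ∈ Ioo (-π) π) : ∀ s ∈ I, θ s ∈ Ioo (-π) π := by
  intro s hs
  rw [mem_Ioo]
  by_contra! h
  rcases le_or_gt (θ s) (-π) with hle | hgt
  · obtain ⟨u, hu, hθu⟩ := hI.intermediate_value hs ht₀ hθ ⟨hle, h₀.1.le⟩
    exact hcos u hu (by rw [hθu, cos_neg, cos_pi])
  · obtain ⟨u, hu, hθu⟩ := hI.intermediate_value ht₀ hs hθ ⟨h₀.2.le, h hgt⟩
    exact hcos u hu (by rw [hθu, cos_pi])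

theorem strictMonoOn_inter_Ici_of_hasDerivAt_pos {f f' : ℝ → ℝ} {D : Set ℝ} {a : ℝ}
    (hD : Convex ℝ D) (hDo : IsOpen D) (hf : ∀ t ∈ D, HasDerivAt f (f' t) t)
    (hf' : ∀ t ∈ D, a < t → 0 < f' t) : StrictMonoOn f (D ∩ Ici a) := by
  refine strictMonoOn_of_deriv_pos (hD.inter (convex_Ici a))
    (fun t ht => (hf t ht.1).continuousAt.continuousWithinAt) fun t ht => ?_
  rw [interior_inter, hDo.interior_eq, interior_Ici] at ht
  rw [(hf t ht.1).deriv]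
  exact hf' t ht.1 ht.2

theorem strictAntiOn_inter_Iic_of_hasDerivAt_neg {f f' : ℝ → ℝ} {D : Set ℝ} {a : ℝ}
    (hD : Convex ℝ D) (hDo : IsOpen D) (hf : ∀ t ∈ D, HasDerivAt f (f' t) t)
    (hf' : ∀ t ∈ D, t < a → f' t < 0) : StrictAntiOn f (D ∩ Iic a) := by
  refine strictAntiOn_of_deriv_neg (hD.inter (convex_Iic a))
    (fun t ht => (hf t ht.1).continuousAt.continuousWithinAt) fun t ht => ?_
  rw [interior_inter, hDo.interior_eq, interior_Iic] at ht
  rw [(hf t ht.1).deriv]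
  exact hf' t ht.1 ht.2

theorem LipschitzWith.mul_of_norm_le {α R : Type*} [PseudoMetricSpace α] [SeminormedRing R]
    {f g : α → R} {Kf Kg A B : ℝ≥0} (hf : LipschitzWith Kf f) (hg : LipschitzWith Kg g)
    (hfA : ∀ a, ‖f a‖ ≤ A) (hgB : ∀ a, ‖g a‖ ≤ B) :
    LipschitzWith (A * Kg + B * Kf) fun a => f a * g a := by
  refine LipschitzWith.of_dist_le_mul fun a b => ?_
  rw [dist_eq_norm, show f a * g a - f b * g b = f a * (g a - g b) + (f a - f b) * g b by
    noncomm_ring]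
  calc ‖f a * (g a - g b) + (f a - f b) * g b‖
      ≤ ‖f a‖ * ‖g a - g b‖ + ‖f a - f b‖ * ‖g b‖ :=
        (norm_add_le _ _).trans (add_le_add (norm_mul_le _ _) (norm_mul_le _ _))
    _ ≤ A * (Kg * dist a b) + Kf * dist a b * B := by
        rw [← dist_eq_norm, ← dist_eq_norm]
        gcongr
        exacts [hfA a, hg.dist_le_mul a b, hf.dist_le_mul a b, hgB b]
    _ = _ := by push_cast; ring

theorem lipschitzWith_inv_max {δ : ℝ} (hδ : 0 < δ) :
    LipschitzWith (δ⁻¹ ^ 2).toNNReal fun y : ℝ => (max δ y)⁻¹ := by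
  refine LipschitzWith.of_dist_le_mul fun a b => ?_
  have ha : 0 < max δ a := lt_max_of_lt_left hδ
  have hb : 0 < max δ b := lt_max_of_lt_left hδ
  rw [Real.coe_toNNReal _ (by positivity), Real.dist_eq, inv_sub_inv ha.ne' hb.ne', abs_div,
    abs_of_pos (mul_pos ha hb), ← Real.dist_eq, dist_comm]
  calc dist (max δ a) (max δ b) / (max δ a * max δ b) ≤ dist a b / (δ * δ) := by
        gcongr
        · simpa using (LipschitzWith.id.const_max δ).dist_le_mul a b
        all_goals exact le_max_left _ _
    _ = δ⁻¹ ^ 2 * dist a b := by field_simp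

theorem abs_mul_cos_add_le (a b θ : ℝ) : |a * cos θ + b| ≤ |a| + |b| := by
  refine (abs_add_le _ _).trans (add_le_add ?_ le_rfl)
  simpa [abs_mul] using mul_le_of_le_one_right (abs_nonneg a) (abs_cos_le_one θ)

noncomputable def truncatedField (m n δ : ℝ) (p : ℝ × ℝ × ℝ) : ℝ × ℝ × ℝ :=
  (((m - 1) * cos p.1 + n) / max δ p.2.2, cos p.1, sin p.1)

theorem truncatedField_of_le {m n δ : ℝ} {p : ℝ × ℝ × ℝ} (hp : δ ≤ p.2.2) :
    truncatedField m n δ p = (((m - 1) * cos p.1 + n) / p.2.2, cos p.1, sin p.1) := by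
  rw [truncatedField, max_eq_right hp]

theorem lipschitzWith_truncatedField (m n : ℝ) {δ : ℝ} (hδ : 0 < δ) :
    ∃ K, LipschitzWith K (truncatedField m n δ) := by
  have hcos : LipschitzWith 1 fun p : ℝ × ℝ × ℝ => cos p.1 := by
    simpa [Function.comp_def] using lipschitzWith_cos.comp LipschitzWith.prod_fst
  have hsin : LipschitzWith 1 fun p : ℝ × ℝ × ℝ => sin p.1 := by
    simpa [Function.comp_def] using lipschitzWith_sin.comp LipschitzWith.prod_fst
  have hnum : LipschitzWith (‖m - 1‖₊ * 1 + 0) fun p : ℝ × ℝ × ℝ => (m - 1) * cos p.1 + n :=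
    ((lipschitzWith_smul (m - 1)).comp hcos).add (LipschitzWith.const n)
  have hden : LipschitzWith ((δ⁻¹ ^ 2).toNNReal * (1 * 1)) fun p : ℝ × ℝ × ℝ => (max δ p.2.2)⁻¹ :=
    (lipschitzWith_inv_max hδ).comp (LipschitzWith.prod_snd.comp LipschitzWith.prod_snd)
  have hnum_le : ∀ p : ℝ × ℝ × ℝ,
      ‖(m - 1) * cos p.1 + n‖ ≤ ((‖m - 1‖₊ + ‖n‖₊ : ℝ≥0) : ℝ) := fun p => by
    simpa using abs_mul_cos_add_le (m - 1) n p.1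
  have hden_le : ∀ p : ℝ × ℝ × ℝ, ‖(max δ p.2.2)⁻¹‖ ≤ δ⁻¹.toNNReal := fun p => by
    rw [Real.coe_toNNReal _ (by positivity), norm_inv,
      Real.norm_of_nonneg (hδ.le.trans (le_max_left _ _))]
    exact inv_anti₀ hδ (le_max_left _ _)
  exact ⟨_, ((hnum.mul_of_norm_le hden hnum_le hden_le).prodMk (hcos.prodMk hsin))⟩

theorem norm_truncatedField_le (m n : ℝ) {δ : ℝ} (hδ : 0 < δ) (p : ℝ × ℝ × ℝ) :
    ‖truncatedField m n δ p‖ ≤ max ((|m - 1| + |n|) / δ) 1 := by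
  simp only [truncatedField, norm_prod_le_iff, Real.norm_eq_abs]
  refine ⟨le_max_of_le_left ?_, le_max_of_le_right (abs_cos_le_one _),
    le_max_of_le_right (abs_sin_le_one _)⟩
  rw [abs_div, abs_of_pos (lt_max_of_lt_left hδ)]
  exact div_le_div₀ (by positivity) (abs_mul_cos_add_le _ _ _) hδ (le_max_left _ _)

def IsGeneratingCurveOn (m n : ℝ) (θ x z θd : ℝ → ℝ) (I : Set ℝ) : Prop :=
  ∀ s ∈ I, HasDerivAt x (cos (θ s)) s ∧ HasDerivAt z (sin (θ s)) s ∧ HasDerivAt θ (θd s) s ∧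
    0 < z s ∧ θd s = ((m - 1) * cos (θ s) + n) / z s

theorem isGeneratingCurveOn_of_isIntegralCurve {m n δ : ℝ} (hδ : 0 < δ) {γ : ℝ → ℝ × ℝ × ℝ}
    (hγ : IsIntegralCurve γ fun _ => truncatedField m n δ) {J : Set ℝ}
    (hJ : ∀ s ∈ J, δ ≤ (γ s).2.2) :
    IsGeneratingCurveOn m n (fun s => (γ s).1) (fun s => (γ s).2.1) (fun s => (γ s).2.2)
      (fun s => ((m - 1) * cos (γ s).1 + n) / (γ s).2.2) J := by
  intro s hs
  have hγs : HasDerivAt γ (truncatedField m n δ (γ s)) s := hγ s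
  rw [truncatedField_of_le (hJ s hs)] at hγs
  exact ⟨hγs.snd.fst, hγs.snd.snd, hγs.fst, hδ.trans_le (hJ s hs), rfl⟩

namespace IsGeneratingCurveOn

variable {m n : ℝ} {θ x z θd : ℝ → ℝ} {I : Set ℝ} {t₀ : ℝ}

theorem sub_one_mul_cos_add_pos (h : IsGeneratingCurveOn m n θ x z θd I)
    (hI : IsPreconnected I) (hIo : IsOpen I) (ht₀ : t₀ ∈ I)
    (hpos : 0 < (m - 1) * cos (θ t₀) + n) : ∀ s ∈ I, 0 < (m - 1) * cos (θ s) + n := by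
  -- `g = (m - 1) cos θ + n` solves the linear equation `g' = -(m - 1) (sin θ / z) g`
  refine pos_of_hasDerivAt_eq_mul hI hIo (c := fun s => -((m - 1) * sin (θ s)) / z s)
    (fun s hs => ?_) (fun s hs => ?_) ht₀ hpos
  · obtain ⟨-, hz, hθ, hzpos, -⟩ := h s hs
    exact ((hθ.sin.continuousAt.const_mul _).neg.div hz.continuousAt hzpos.ne').continuousWithinAt
  · obtain ⟨-, -, hθ, hzpos, hθd⟩ := h s hs
    refine ((hθ.cos.const_mul (m - 1)).add_const n).congr_deriv ?_
    rw [hθd]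
    field_simp

theorem strictMonoOn (h : IsGeneratingCurveOn m n θ x z θd I) (hI : I.OrdConnected)
    (hIo : IsOpen I) (hpos : ∀ s ∈ I, 0 < (m - 1) * cos (θ s) + n) : StrictMonoOn θ I := by
  refine strictMonoOn_of_deriv_pos hI.convex
    (fun s hs => (h s hs).2.2.1.continuousAt.continuousWithinAt) fun s hs => ?_
  rw [hIo.interior_eq] at hs
  obtain ⟨-, -, hθ, hzpos, hθd⟩ := h s hs
  rw [hθ.deriv, hθd]
  exact div_pos (hpos s hs) hzpos

theorem hasDerivAt_truncatedField (h : IsGeneratingCurveOn m n θ x z θd I) {δ : ℝ}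
    (hzδ : ∀ s ∈ I, δ ≤ z s) :
    ∀ s ∈ I, HasDerivAt (fun s => (θ s, x s, z s)) (truncatedField m n δ (θ s, x s, z s)) s := by
  intro s hs
  obtain ⟨hx, hz, hθ, -, hθd⟩ := h s hs
  rw [truncatedField_of_le (hzδ s hs), ← hθd]
  exact hθ.prodMk (hx.prodMk hz)

theorem eq_univ_of_le (h : IsGeneratingCurveOn m n θ x z θd I) (hI : IsPreconnected I)
    (hIo : IsOpen I) (ht₀ : t₀ ∈ I) {δ : ℝ} (hδ : 0 < δ) (hzδ : ∀ s ∈ I, δ ≤ z s)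
    (hmax : ∀ (J : Set ℝ) (θ₂ x₂ z₂ θd₂ : ℝ → ℝ), J.OrdConnected → IsOpen J → I ⊆ J →
      (∀ s ∈ I, θ₂ s = θ s ∧ x₂ s = x s ∧ z₂ s = z s) →
      IsGeneratingCurveOn m n θ₂ x₂ z₂ θd₂ J → J ⊆ I) :
    I = univ := by
  obtain ⟨K, hK⟩ := lipschitzWith_truncatedField m n (half_pos hδ)
  obtain ⟨γ, hγ₀, hγ⟩ := exists_isIntegralCurve_of_lipschitzWith hK
    (norm_truncatedField_le m n (half_pos hδ)) t₀ (θ t₀, x t₀, z t₀)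
  have hγc := hγ.continuous
  have hγI : ∀ s ∈ I, γ s = (θ s, x s, z s) :=
    ODE_solution_unique_of_isPreconnected hI hIo (fun _ _ => ⟨K, .of_forall fun _ => hK⟩)
      (fun s _ => hγ s) (h.hasDerivAt_truncatedField fun s hs => by linarith [hzδ s hs]) ht₀ hγ₀
  set U := {s | δ / 2 < (γ s).2.2}
  have hUo : IsOpen U := isOpen_lt continuous_const (by fun_prop)
  have hIδ : closure I ⊆ {s | δ ≤ (γ s).2.2} :=
    closure_minimal (fun s hs => by simpa [hγI s hs] using hzδ s hs)
      (isClosed_le continuous_const (by fun_prop))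
  have hIU : closure I ⊆ U := fun s hs => (half_lt_self hδ).trans_le (hIδ hs)
  have hIJ : I ⊆ connectedComponentIn U t₀ :=
    hI.subset_connectedComponentIn ht₀ (subset_closure.trans hIU)
  have hJI : connectedComponentIn U t₀ ⊆ I :=
    hmax _ _ _ _ _ isPreconnected_connectedComponentIn.ordConnected hUo.connectedComponentIn hIJ
      (fun s hs => by simp [hγI s hs]) (isGeneratingCurveOn_of_isIntegralCurve (half_pos hδ) hγ
        fun s hs => (connectedComponentIn_subset _ _ hs).le)
  -- `I` is the component of `U` through `t₀`, and contains its closure since `closure I ⊆ U`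
  have hIcl : IsClosed I := closure_subset_iff_isClosed.1 <|
    (hI.closure.subset_connectedComponentIn (subset_closure ht₀) hIU).trans hJI
  exact IsClopen.eq_univ ⟨hIcl, hIo⟩ ⟨t₀, ht₀⟩

end IsGeneratingCurveOn

theorem stmt8_general (m n : ℝ) (θ x z θd : ℝ → ℝ) (I : Set ℝ)
    (hI : I.OrdConnected) (hIopen : IsOpen I) (hI0 : (0 : ℝ) ∈ I)
    (hx : ∀ s ∈ I, HasDerivAt x (Real.cos (θ s)) s)
    (hz : ∀ s ∈ I, HasDerivAt z (Real.sin (θ s)) s)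
    (hθ : ∀ s ∈ I, HasDerivAt θ (θd s) s)
    (hzpos : ∀ s ∈ I, 0 < z s)
    (hode : ∀ s ∈ I, θd s = ((m - 1) * Real.cos (θ s) + n) / z s)
    (hθ0 : θ 0 = 0) (hm : n + 1 ≤ m)
    (hmn : 0 < n + m - 1)
    (hmax : ∀ (J : Set ℝ) (θ₂ x₂ z₂ θd₂ : ℝ → ℝ),
      J.OrdConnected → IsOpen J → I ⊆ J →
      (∀ s ∈ I, θ₂ s = θ s ∧ x₂ s = x s ∧ z₂ s = z s) →
      (∀ s ∈ J, HasDerivAt x₂ (Real.cos (θ₂ s)) s ∧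
        HasDerivAt z₂ (Real.sin (θ₂ s)) s ∧ HasDerivAt θ₂ (θd₂ s) s ∧
        0 < z₂ s ∧ θd₂ s = ((m - 1) * Real.cos (θ₂ s) + n) / z₂ s) →
      J ⊆ I) :
    (∀ s ∈ I, Real.cos (θ s) ≠ -1 ∧ -π < θ s ∧ θ s < π) ∧
    StrictMonoOn z (I ∩ Ici 0) ∧
    I = Set.univ := by
  have hsol : IsGeneratingCurveOn m n θ x z θd I :=
    fun s hs => ⟨hx s hs, hz s hs, hθ s hs, hzpos s hs, hode s hs⟩
  have hpos := hsol.sub_one_mul_cos_add_pos hI.isPreconnected hIopen hI0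
    (by rw [hθ0, cos_zero]; linarith)
  have hcos : ∀ s ∈ I, cos (θ s) ≠ -1 := fun s hs hs' => by
    have := hpos s hs
    rw [hs'] at this
    linarith
  have hθπ := mem_Ioo_neg_pi_pi_of_cos_ne_neg_one hI.isPreconnected
    (fun s hs => (hθ s hs).continuousAt.continuousWithinAt) hcos hI0
    (by rw [hθ0]; exact ⟨neg_neg_of_pos pi_pos, pi_pos⟩)
  have hθmono := hsol.strictMonoOn hI hIopen hpos
  have hzmono : StrictMonoOn z (I ∩ Ici 0) :=
    strictMonoOn_inter_Ici_of_hasDerivAt_pos hI.convex hIopen hz fun s hs h0 =>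
      sin_pos_of_pos_of_lt_pi (hθ0 ▸ hθmono hI0 hs h0) (hθπ s hs).2
  have hzanti : StrictAntiOn z (I ∩ Iic 0) :=
    strictAntiOn_inter_Iic_of_hasDerivAt_neg hI.convex hIopen hz fun s hs h0 =>
      sin_neg_of_neg_of_neg_pi_lt (hθ0 ▸ hθmono hs hI0 h0) (hθπ s hs).1
  have hz0 : ∀ s ∈ I, z 0 ≤ z s := fun s hs => (le_total s 0).elim
    (fun h => hzanti.antitoneOn ⟨hs, h⟩ ⟨hI0, self_mem_Iic⟩ h)
    (fun h => hzmono.monotoneOn ⟨hI0, self_mem_Ici⟩ ⟨hs, h⟩ h)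
  exact ⟨fun s hs => ⟨hcos s hs, hθπ s hs⟩, hzmono,
    hsol.eq_univ_of_le hI.isPreconnected hIopen hI0 (hzpos 0 hI0) hz0 hmax⟩

/-- Case `n + m - 1 > 0`, `m ≥ n + 1 > 1`: along the generating curve of a
parabolic surface with `κ₁ = m κ₂ + n` and `θ(0) = 0`, one has
`cos θ(s) ≠ -1`, so `-π < θ(s) < π`; moreover `z` is increasing for `s > 0`
and the maximal interval of existence is all of `ℝ`. -/
theorem stmt8 (m n : ℝ) (θ x z θd : ℝ → ℝ) (I : Set ℝ)
    (hI : I.OrdConnected) (hIopen : IsOpen I) (hI0 : (0 : ℝ) ∈ I)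
    (hx : ∀ s ∈ I, HasDerivAt x (Real.cos (θ s)) s)
    (hz : ∀ s ∈ I, HasDerivAt z (Real.sin (θ s)) s)
    (hθ : ∀ s ∈ I, HasDerivAt θ (θd s) s)
    (hzpos : ∀ s ∈ I, 0 < z s)
    (hode : ∀ s ∈ I, θd s = ((m - 1) * Real.cos (θ s) + n) / z s)
    (hθ0 : θ 0 = 0) (hn : 0 ≤ n) (hm : n + 1 ≤ m) (hn1 : 1 < n + 1)
    (hmn : 0 < n + m - 1)
    (hmax : ∀ (J : Set ℝ) (θ₂ x₂ z₂ θd₂ : ℝ → ℝ),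
      J.OrdConnected → IsOpen J → I ⊆ J →
      (∀ s ∈ I, θ₂ s = θ s ∧ x₂ s = x s ∧ z₂ s = z s) →
      (∀ s ∈ J, HasDerivAt x₂ (Real.cos (θ₂ s)) s ∧
        HasDerivAt z₂ (Real.sin (θ₂ s)) s ∧ HasDerivAt θ₂ (θd₂ s) s ∧
        0 < z₂ s ∧ θd₂ s = ((m - 1) * Real.cos (θ₂ s) + n) / z₂ s) →
      J ⊆ I) :
    (∀ s ∈ I, Real.cos (θ s) ≠ -1 ∧ -π < θ s ∧ θ s < π) ∧
    StrictMonoOn z (I ∩ Ici 0) ∧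
    I = Set.univ :=
  stmt8_general m n θ x z θd I hI hIopen hI0 hx hz hθ hzpos hode hθ0 hm hmn hmax
end

section
/- Let θ, x, z solve x' = cos θ, z' = sin θ, z > 0, with θ'(s) = ((m−1) cos θ(s) + n)/z(s), θ(0) = 0, m ≥ 1, n = 0, m > 1. Then θ(s) ∈ (−π/2, π/2) for all s, x'(s) = cos θ(s) > 0, and z''(s) = θ'(s) cos θ(s) > 0 for s with θ'(s) > 0; hence the generating curve is a strictly convex graph over the x-axis with a minimum at s = 0. -/
open Real Set

/-!
Since `z' = sin θ` and `θ' = (m - 1) cos θ / z`, the quantity `z ^ (m - 1) * cos θ` is a first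
integral, equal to `z(0) ^ (m - 1)` because `θ(0) = 0`. Hence `cos θ > 0` along the curve, so the
continuous function `θ` can never reach `±π/2`, and `z(s) ^ (m - 1) = z(0) ^ (m - 1) / cos θ(s)`
is at least `z(0) ^ (m - 1)`, which gives `z(0) ≤ z(s)` as `m - 1 > 0`.
-/

theorem Set.OrdConnected.eq_of_hasDerivAt_eq_zero {E : Type*} [NormedAddCommGroup E]
    [NormedSpace ℝ E] {f : ℝ → E} {I : Set ℝ} (hI : I.OrdConnected)
    (hf : ∀ s ∈ I, HasDerivAt f 0 s) {a b : ℝ} (ha : a ∈ I) (hb : b ∈ I) : f b = f a := by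
  have h := hI.convex.norm_image_sub_le_of_norm_hasDerivWithin_le
    (fun s hs => (hf s hs).hasDerivWithinAt) (fun _ _ => norm_zero.le) ha hb
  rwa [zero_mul, norm_le_zero_iff, sub_eq_zero] at h

theorem IsPreconnected.mapsTo_Ioo {f : ℝ → ℝ} {I : Set ℝ} (hI : IsPreconnected I)
    (hf : ContinuousOn f I) {a c d : ℝ} (ha : a ∈ I) (hfa : f a ∈ Ioo c d)
    (hc : ∀ s ∈ I, f s ≠ c) (hd : ∀ s ∈ I, f s ≠ d) : MapsTo f I (Ioo c d) := by
  have himage := (hI.image f hf).ordConnected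
  intro s hs
  by_contra hout
  rcases not_and_or.mp hout with hle | hge
  · obtain ⟨t, ht, htc⟩ : c ∈ f '' I :=
      himage.out (mem_image_of_mem f hs) (mem_image_of_mem f ha) ⟨not_lt.mp hle, hfa.1.le⟩
    exact hc t ht htc
  · obtain ⟨t, ht, htd⟩ : d ∈ f '' I :=
      himage.out (mem_image_of_mem f ha) (mem_image_of_mem f hs) ⟨hfa.2.le, not_lt.mp hge⟩
    exact hd t ht htd

theorem hasDerivAt_rpow_mul_cos_eq_zero {p : ℝ} {z θ : ℝ → ℝ} {s : ℝ}
    (hz : HasDerivAt z (sin (θ s)) s) (hθ : HasDerivAt θ (p * cos (θ s) / z s) s)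
    (hzs : z s ≠ 0) : HasDerivAt (fun t => z t ^ p * cos (θ t)) 0 s := by
  have hzp := (hasDerivAt_rpow_const (p := p) (Or.inl hzs)).comp s hz
  refine (hzp.mul ((hasDerivAt_cos (θ s)).comp s hθ)).congr_deriv ?_
  simp only [Function.comp_apply, rpow_sub_one hzs]
  field_simp
  ring

theorem stmt9_general (m : ℝ) (θ z θd : ℝ → ℝ) (I : Set ℝ)
    (hI : I.OrdConnected) (hI0 : (0 : ℝ) ∈ I)
    (hz : ∀ s ∈ I, HasDerivAt z (Real.sin (θ s)) s)
    (hθ : ∀ s ∈ I, HasDerivAt θ (θd s) s)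
    (hzpos : ∀ s ∈ I, 0 < z s)
    (hode : ∀ s ∈ I, θd s = ((m - 1) * Real.cos (θ s) + 0) / z s)
    (hθ0 : θ 0 = 0) (hm : 1 < m) :
    (∀ s ∈ I, -(π / 2) < θ s ∧ θ s < π / 2 ∧ 0 < Real.cos (θ s)) ∧
    (∀ s ∈ I, 0 < θd s → 0 < θd s * Real.cos (θ s)) ∧
    (∀ s ∈ I, z 0 ≤ z s) := by
  have hθ' : ∀ s ∈ I, HasDerivAt θ ((m - 1) * cos (θ s) / z s) s := fun s hs => by
    simpa only [hode s hs, add_zero] using hθ s hs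
  have hfirst : ∀ s ∈ I, z s ^ (m - 1) * cos (θ s) = z 0 ^ (m - 1) := fun s hs => by
    have hconst := hI.eq_of_hasDerivAt_eq_zero (fun t ht =>
      hasDerivAt_rpow_mul_cos_eq_zero (hz t ht) (hθ' t ht) (hzpos t ht).ne') hI0 hs
    simpa only [hθ0, cos_zero, mul_one] using hconst
  have hcos : ∀ s ∈ I, 0 < cos (θ s) := fun s hs =>
    pos_of_mul_pos_right ((hfirst s hs).symm ▸ rpow_pos_of_pos (hzpos 0 hI0) _)
      (rpow_pos_of_pos (hzpos s hs) _).le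
  have hθI : MapsTo θ I (Ioo (-(π / 2)) (π / 2)) :=
    hI.isPreconnected.mapsTo_Ioo (fun s hs => (hθ s hs).continuousAt.continuousWithinAt) hI0
      (by simp [hθ0, pi_pos])
      (fun s hs h => (hcos s hs).ne' (by rw [h, cos_neg, cos_pi_div_two]))
      (fun s hs h => (hcos s hs).ne' (by rw [h, cos_pi_div_two]))
  refine ⟨fun s hs => ⟨(hθI hs).1, (hθI hs).2, hcos s hs⟩,
    fun s hs hθd => mul_pos hθd (hcos s hs), fun s hs => ?_⟩
  rw [← rpow_le_rpow_iff (hzpos 0 hI0).le (hzpos s hs).le (sub_pos.mpr hm), ← hfirst s hs]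
  exact mul_le_of_le_one_right (rpow_nonneg (hzpos s hs).le _) (cos_le_one _)

/-- Case `n = 0`, `m > 1`: the generating curve of a parabolic surface with
`κ₁ = m κ₂`, `θ(0) = 0`, satisfies `θ ∈ (-π/2, π/2)`, `x' = cos θ > 0`, and
`z'' = θ' cos θ > 0` where `θ' > 0`; it is a strictly convex graph over the
`x`-axis with a minimum at `s = 0`. -/
theorem stmt9 (m : ℝ) (θ x z θd : ℝ → ℝ) (I : Set ℝ)
    (hI : I.OrdConnected) (hI0 : (0 : ℝ) ∈ I)
    (hx : ∀ s ∈ I, HasDerivAt x (Real.cos (θ s)) s)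
    (hz : ∀ s ∈ I, HasDerivAt z (Real.sin (θ s)) s)
    (hθ : ∀ s ∈ I, HasDerivAt θ (θd s) s)
    (hzpos : ∀ s ∈ I, 0 < z s)
    (hode : ∀ s ∈ I, θd s = ((m - 1) * Real.cos (θ s) + 0) / z s)
    (hθ0 : θ 0 = 0) (hm : 1 < m) :
    (∀ s ∈ I, -(π / 2) < θ s ∧ θ s < π / 2 ∧ 0 < Real.cos (θ s)) ∧
    (∀ s ∈ I, 0 < θd s → 0 < θd s * Real.cos (θ s)) ∧
    (∀ s ∈ I, z 0 ≤ z s) :=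
  stmt9_general m θ z θd I hI hI0 hz hθ hzpos hode hθ0 hm
end

section
/- Let θ, x, z solve x' = cos θ, z' = sin θ, z > 0, with (1 + b cos θ)·z·θ' + 2 cos θ − b sin²θ = 0, θ(0) = 0, and b ≥ 0. Then cos θ(s) ≠ 0 for all s (so −π/2 < θ(s) < π/2), θ is strictly decreasing, z is strictly decreasing for s > 0, and the maximal positive time of existence s̄ is finite. -/
open Real Set

/-! Write `c = cos θ`. Since `b sin²θ = b (1 - c²)`, the equation reads
`(1 + b c) z θ' = -(b c² + 2 c - b)`, whose right-hand side is negative as long as `c` exceeds the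
nonnegative root `c*` of `b c² + 2 c - b`, i.e. as long as `|θ| < θ* = arccos c*`. Starting from
`θ(0) = 0`, the angle cannot reach `±θ*` in finite time: near `-θ*` the right-hand side is
Lipschitz in `θ + θ*` and vanishes there, so a Grönwall estimate keeps `θ + θ*` positive; the case
`s < 0` follows from the symmetry `s ↦ -s`, `θ ↦ -θ`. Hence `cos θ > 0` and `θ' < 0` throughout, so
`z' = sin θ` is negative for `s > 0` and bounded away from `0` beyond any fixed positive time, and
`z > 0` forces the interval of existence to be bounded above. -/

noncomputable def rhsPoly (b c : ℝ) : ℝ := b * c ^ 2 + 2 * c - b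

/-- The nonnegative root of `rhsPoly b` (for `b ≥ 0`). -/
noncomputable def critCos (b : ℝ) : ℝ := b / (1 + √(1 + b ^ 2))

noncomputable def critAngle (b : ℝ) : ℝ := arccos (critCos b)

section Algebra

variable {b c : ℝ}

lemma one_add_sqrt_one_add_sq_pos (b : ℝ) : 0 < 1 + √(1 + b ^ 2) := by positivity

lemma critCos_nonneg (hb : 0 ≤ b) : 0 ≤ critCos b :=
  div_nonneg hb (one_add_sqrt_one_add_sq_pos b).le

lemma critCos_lt_one (b : ℝ) : critCos b < 1 := by
  have hS : √(1 + b ^ 2) ^ 2 = 1 + b ^ 2 := sq_sqrt (by positivity)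
  rw [critCos, div_lt_one (one_add_sqrt_one_add_sq_pos b)]
  nlinarith [sqrt_nonneg (1 + b ^ 2)]

lemma rhsPoly_critCos (b : ℝ) : rhsPoly b (critCos b) = 0 := by
  have hS : √(1 + b ^ 2) ^ 2 = 1 + b ^ 2 := sq_sqrt (by positivity)
  have hne : 1 + √(1 + b ^ 2) ≠ 0 := (one_add_sqrt_one_add_sq_pos b).ne'
  rw [rhsPoly, critCos]
  field_simp
  linear_combination (b * √(1 + b ^ 2) - b * (1 + √(1 + b ^ 2))) * hS

lemma rhsPoly_eq_mul (b c : ℝ) :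
    rhsPoly b c = (c - critCos b) * (b * (c + critCos b) + 2) := by
  have h := rhsPoly_critCos b
  unfold rhsPoly at *
  linear_combination h

lemma rhsPoly_cos (b y : ℝ) : rhsPoly b (cos y) = 2 * cos y - b * sin y ^ 2 := by
  rw [rhsPoly]
  linear_combination b * sin_sq_add_cos_sq y

lemma rhsPoly_pos (hb : 0 ≤ b) (hc : critCos b < c) : 0 < rhsPoly b c := by
  have := critCos_nonneg hb
  rw [rhsPoly_eq_mul]
  exact mul_pos (sub_pos.2 hc) (by nlinarith)

lemma rhsPoly_le (hb : 0 ≤ b) (hc : critCos b ≤ c) (hc1 : c ≤ 1) :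
    rhsPoly b c ≤ (2 * b + 2) * (c - critCos b) := by
  have := critCos_lt_one b
  rw [rhsPoly_eq_mul, mul_comm]
  exact mul_le_mul_of_nonneg_right (by nlinarith) (sub_nonneg.2 hc)

end Algebra

section Angle

variable {b x : ℝ}

lemma critAngle_pos (b : ℝ) : 0 < critAngle b := arccos_pos.2 (critCos_lt_one b)

lemma critAngle_le_pi_div_two (hb : 0 ≤ b) : critAngle b ≤ π / 2 :=
  arccos_le_pi_div_two.2 (critCos_nonneg hb)

lemma Ioo_critAngle_subset (hb : 0 ≤ b) :
    Ioo (-critAngle b) (critAngle b) ⊆ Ioo (-(π / 2)) (π / 2) :=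
  Ioo_subset_Ioo (neg_le_neg (critAngle_le_pi_div_two hb)) (critAngle_le_pi_div_two hb)

lemma cos_critAngle (hb : 0 ≤ b) : cos (critAngle b) = critCos b :=
  cos_arccos (by linarith [critCos_nonneg hb]) (critCos_lt_one b).le

lemma critCos_lt_cos (hb : 0 ≤ b) (hx : x ∈ Ioo (-critAngle b) (critAngle b)) :
    critCos b < cos x := by
  rw [← cos_critAngle hb, ← cos_abs x]
  exact cos_lt_cos_of_nonneg_of_le_pi (abs_nonneg x)
    (by linarith [critAngle_le_pi_div_two hb, pi_pos]) (abs_lt.2 hx)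

lemma cos_sub_critCos_le (hb : 0 ≤ b) (hx : -critAngle b ≤ x) :
    cos x - critCos b ≤ x + critAngle b := by
  calc cos x - critCos b = cos x - cos (-critAngle b) := by rw [cos_neg, cos_critAngle hb]
    _ ≤ |x - -critAngle b| := (le_abs_self _).trans (abs_cos_sub_cos_le _ _)
    _ = x + critAngle b := by rw [sub_neg_eq_add, abs_of_nonneg (by linarith)]

end Angle

section ProfileEquation

variable {b c w d : ℝ}

lemma neg_of_mul_add_rhsPoly_eq_zero (hb : 0 ≤ b) (hw : 0 < w) (hc : critCos b < c)
    (h : (1 + b * c) * w * d + rhsPoly b c = 0) : d < 0 := by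
  have hq := rhsPoly_pos hb hc
  have hbc : 0 ≤ b * c := mul_nonneg hb ((critCos_nonneg hb).trans hc.le)
  by_contra! hd
  nlinarith [mul_nonneg (mul_nonneg (by linarith : (0 : ℝ) ≤ 1 + b * c) hw.le) hd]

lemma neg_mul_le_of_mul_add_rhsPoly_eq_zero {m u : ℝ} (hb : 0 ≤ b) (hm : 0 < m) (hmw : m ≤ w)
    (hc : critCos b < c) (hc1 : c ≤ 1) (hcu : c - critCos b ≤ u)
    (h : (1 + b * c) * w * d + rhsPoly b c = 0) : -((2 * b + 2) / m) * u ≤ d := by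
  have hd : d ≤ 0 := (neg_of_mul_add_rhsPoly_eq_zero hb (hm.trans_le hmw) hc h).le
  have hbc : 0 ≤ b * c := mul_nonneg hb ((critCos_nonneg hb).trans hc.le)
  have hmd : (1 + b * c) * w * d ≤ m * d :=
    mul_le_mul_of_nonpos_right (by nlinarith) hd
  have hq : rhsPoly b c ≤ (2 * b + 2) * u :=
    (rhsPoly_le hb hc.le hc1).trans (mul_le_mul_of_nonneg_left hcu (by linarith))
  rw [neg_mul, neg_le, div_mul_eq_mul_div, le_div_iff₀ hm]
  linarith

end ProfileEquation

section Calculus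

variable {u u' : ℝ → ℝ} {a s : ℝ}

/-- Grönwall: `u e^{K t}` is monotone. -/
lemma pos_of_neg_mul_le_deriv {K : ℝ} (has : a ≤ s) (hu : ∀ t ∈ Icc a s, HasDerivAt u (u' t) t)
    (hK : ∀ t ∈ Ioo a s, -K * u t ≤ u' t) (ha : 0 < u a) : 0 < u s := by
  have hderiv (t : ℝ) (ht : t ∈ Icc a s) : HasDerivAt (fun t ↦ u t * exp (K * t))
      ((u' t + K * u t) * exp (K * t)) t :=
    ((hu t ht).mul ((hasDerivAt_id' t).const_mul K).exp).congr_deriv (by ring)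
  have hmono : MonotoneOn (fun t ↦ u t * exp (K * t)) (Icc a s) := by
    refine monotoneOn_of_hasDerivWithinAt_nonneg (convex_Icc a s)
      (fun t ht ↦ (hderiv t ht).continuousAt.continuousWithinAt)
      (fun t ht ↦ (hderiv t (interior_subset ht)).hasDerivWithinAt) fun t ht ↦ ?_
    rw [interior_Icc] at ht
    exact mul_nonneg (by linarith [hK t ht]) (exp_pos _).le
  have := hmono (left_mem_Icc.2 has) (right_mem_Icc.2 has) has
  exact pos_of_mul_pos_left ((mul_pos ha (exp_pos _)).trans_le this) (exp_pos _).le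

lemma le_add_div_of_deriv_le_neg {c : ℝ} (hc : 0 < c) (has : a ≤ s)
    (hu : ∀ t ∈ Icc a s, HasDerivAt u (u' t) t) (hu' : ∀ t ∈ Icc a s, u' t ≤ -c)
    (hs : 0 < u s) : s ≤ a + u a / c := by
  have hsub := (convex_Icc a s).image_sub_le_mul_sub_of_deriv_le
    (fun t ht ↦ (hu t ht).continuousAt.continuousWithinAt)
    (fun t ht ↦ (hu t (interior_subset ht)).differentiableAt.differentiableWithinAt)
    (fun t ht ↦ (hu t (interior_subset ht)).deriv ▸ hu' t (interior_subset ht))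
    a (left_mem_Icc.2 has) s (right_mem_Icc.2 has) has
  rw [← sub_le_iff_le_add', le_div_iff₀ hc]
  nlinarith

lemma bddAbove_of_pos_of_deriv_le_neg_s11 {I : Set ℝ} {s₀ c : ℝ} (hI : I.OrdConnected) (hs₀ : s₀ ∈ I)
    (hc : 0 < c) (hu : ∀ t ∈ I, HasDerivAt u (u' t) t) (hu' : ∀ t ∈ I, s₀ ≤ t → u' t ≤ -c)
    (hpos : ∀ t ∈ I, 0 < u t) : BddAbove I := by
  refine ⟨max s₀ (s₀ + u s₀ / c), fun s hs ↦ ?_⟩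
  rcases le_total s s₀ with hss₀ | hs₀s
  · exact hss₀.trans (le_max_left _ _)
  · have hsub : Icc s₀ s ⊆ I := hI.out hs₀ hs
    exact (le_add_div_of_deriv_le_neg hc hs₀s (fun t ht ↦ hu t (hsub ht))
      (fun t ht ↦ hu' t (hsub ht) ht.1) (hpos s hs)).trans (le_max_right _ _)

lemma strictAntiOn_of_hasDerivAt_neg {D : Set ℝ} (hD : Convex ℝ D)
    (hu : ∀ t ∈ D, HasDerivAt u (u' t) t) (hu' : ∀ t ∈ interior D, u' t < 0) :
    StrictAntiOn u D :=
  strictAntiOn_of_hasDerivWithinAt_neg hD (fun t ht ↦ (hu t ht).continuousAt.continuousWithinAt)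
    (fun t ht ↦ (hu t (interior_subset ht)).hasDerivWithinAt) hu'

lemma exists_first_notMem {α : Type*} [TopologicalSpace α] {f : ℝ → α} {U : Set α}
    (hU : IsOpen U) (has : a ≤ s) (hf : ContinuousOn f (Icc a s)) (ha : f a ∈ U)
    (hs : f s ∉ U) : ∃ c ∈ Ioc a s, f c ∉ U ∧ ∀ t ∈ Ico a c, f t ∈ U := by
  set A := Icc a s ∩ f ⁻¹' Uᶜ
  have hA : IsClosed A := hf.preimage_isClosed_of_isClosed isClosed_Icc hU.isClosed_compl
  have hbdd : BddBelow A := ⟨a, fun t ht ↦ ht.1.1⟩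
  have hmem : sInf A ∈ A := hA.csInf_mem ⟨s, right_mem_Icc.2 has, hs⟩ hbdd
  refine ⟨sInf A, ⟨hmem.1.1.lt_of_ne ?_, hmem.1.2⟩, hmem.2, fun t ht ↦ ?_⟩
  · intro h
    exact hmem.2 (h ▸ ha)
  · by_contra hft
    exact (csInf_le hbdd ⟨⟨ht.1, ht.2.le.trans hmem.1.2⟩, hft⟩).not_gt ht.2

end Calculus

section Profile

variable {b : ℝ} {θ z θd : ℝ → ℝ}

lemma mem_Ioo_critAngle_of_nonneg {s : ℝ} (hb : 0 ≤ b) (hs : 0 ≤ s)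
    (hθ : ∀ t ∈ Icc 0 s, HasDerivAt θ (θd t) t) (hz : ContinuousOn z (Icc 0 s))
    (hzpos : ∀ t ∈ Icc 0 s, 0 < z t)
    (hW : ∀ t ∈ Icc 0 s, (1 + b * cos (θ t)) * z t * θd t + rhsPoly b (cos (θ t)) = 0)
    (hθ0 : θ 0 = 0) : θ s ∈ Ioo (-critAngle b) (critAngle b) := by
  set T := critAngle b
  have hT : 0 < T := critAngle_pos b
  by_contra hout
  obtain ⟨c, hc, hθc, hbefore⟩ := exists_first_notMem isOpen_Ioo hs
    (fun t ht ↦ (hθ t ht).continuousAt.continuousWithinAt) (by simp [hθ0, hT]) hout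
  have hsub : Icc 0 c ⊆ Icc 0 s := Icc_subset_Icc_right hc.2
  have hθd_neg (t : ℝ) (ht : t ∈ Ioo 0 c) : θd t < 0 :=
    neg_of_mul_add_rhsPoly_eq_zero hb (hzpos t (hsub (Ioo_subset_Icc_self ht)))
      (critCos_lt_cos hb (hbefore t ⟨ht.1.le, ht.2⟩)) (hW t (hsub (Ioo_subset_Icc_self ht)))
  have hθc_le : θ c ≤ 0 := by
    have hanti := strictAntiOn_of_hasDerivAt_neg (convex_Icc 0 c)
      (fun t ht ↦ hθ t (hsub ht)) (by rw [interior_Icc]; exact hθd_neg)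
    simpa [hθ0] using (hanti (left_mem_Icc.2 hc.1.le) (right_mem_Icc.2 hc.1.le) hc.1).le
  obtain ⟨t₀, ht₀, hmin⟩ := isCompact_Icc.exists_isMinOn (nonempty_Icc.2 hc.1.le) (hz.mono hsub)
  have hgap : 0 < θ c + T := by
    refine pos_of_neg_mul_le_deriv (u := fun t ↦ θ t + T) (K := (2 * b + 2) / z t₀) hc.1.le
      (fun t ht ↦ (hθ t (hsub ht)).add_const T) (fun t ht ↦ ?_) (by simpa [hθ0] using hT)
    have htU := hbefore t ⟨ht.1.le, ht.2⟩
    exact neg_mul_le_of_mul_add_rhsPoly_eq_zero hb (hzpos t₀ (hsub ht₀)) (hmin (Ioo_subset_Icc_self ht))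
      (critCos_lt_cos hb htU) (cos_le_one _) (cos_sub_critCos_le hb htU.1.le)
      (hW t (hsub (Ioo_subset_Icc_self ht)))
  exact hθc ⟨by linarith, by linarith⟩

/-- The case `s < 0` reduces to `s > 0` through the symmetry `s ↦ -s`, `θ ↦ -θ`. -/
lemma mem_Ioo_critAngle {I : Set ℝ} (hb : 0 ≤ b) (hI : I.OrdConnected) (hI0 : (0 : ℝ) ∈ I)
    (hθ : ∀ t ∈ I, HasDerivAt θ (θd t) t) (hz : ContinuousOn z I) (hzpos : ∀ t ∈ I, 0 < z t)
    (hW : ∀ t ∈ I, (1 + b * cos (θ t)) * z t * θd t + rhsPoly b (cos (θ t)) = 0)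
    (hθ0 : θ 0 = 0) {s : ℝ} (hs : s ∈ I) : θ s ∈ Ioo (-critAngle b) (critAngle b) := by
  rcases le_or_gt 0 s with hs0 | hs0
  · have hsub : Icc 0 s ⊆ I := hI.out hI0 hs
    exact mem_Ioo_critAngle_of_nonneg hb hs0 (fun t ht ↦ hθ t (hsub ht)) (hz.mono hsub)
      (fun t ht ↦ hzpos t (hsub ht)) (fun t ht ↦ hW t (hsub ht)) hθ0
  · have hsub (t : ℝ) (ht : t ∈ Icc 0 (-s)) : -t ∈ I :=
      hI.out hs hI0 ⟨by linarith [ht.2], by linarith [ht.1]⟩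
    have key := mem_Ioo_critAngle_of_nonneg (θ := fun t ↦ -θ (-t)) (z := fun t ↦ z (-t))
      (θd := fun t ↦ θd (-t)) hb (neg_nonneg.2 hs0.le)
      (fun t ht ↦ ((hθ _ (hsub t ht)).comp t (hasDerivAt_neg t)).neg.congr_deriv (by ring))
      (hz.comp continuous_neg.continuousOn hsub) (fun t ht ↦ hzpos _ (hsub t ht))
      (fun t ht ↦ by simpa using hW _ (hsub t ht)) (by simp [hθ0])
    simp only [neg_neg, mem_Ioo] at key
    exact ⟨by linarith [key.2], by linarith [key.1]⟩

end Profile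

theorem stmt11_general (b : ℝ) (θ z θd : ℝ → ℝ) (I : Set ℝ)
    (hI : I.OrdConnected) (hI0 : (0 : ℝ) ∈ I)
    (hz : ∀ s ∈ I, HasDerivAt z (Real.sin (θ s)) s)
    (hθ : ∀ s ∈ I, HasDerivAt θ (θd s) s)
    (hzpos : ∀ s ∈ I, 0 < z s)
    (hW : ∀ s ∈ I, (1 + b * Real.cos (θ s)) * z s * θd s
      + 2 * Real.cos (θ s) - b * Real.sin (θ s) ^ 2 = 0)
    (hθ0 : θ 0 = 0) (hb : 0 ≤ b) :
    (∀ s ∈ I, Real.cos (θ s) ≠ 0 ∧ -(π / 2) < θ s ∧ θ s < π / 2) ∧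
    StrictAntiOn θ I ∧
    StrictAntiOn z (I ∩ Ici 0) ∧
    BddAbove I := by
  have hW' (s : ℝ) (hs : s ∈ I) :
      (1 + b * cos (θ s)) * z s * θd s + rhsPoly b (cos (θ s)) = 0 := by
    rw [rhsPoly_cos, ← add_sub_assoc]
    exact hW s hs
  have hbnd (s : ℝ) (hs : s ∈ I) : θ s ∈ Ioo (-critAngle b) (critAngle b) :=
    mem_Ioo_critAngle hb hI hI0 hθ (fun t ht ↦ (hz t ht).continuousAt.continuousWithinAt)
      hzpos hW' hθ0 hs
  have hhalf (s : ℝ) (hs : s ∈ I) : θ s ∈ Ioo (-(π / 2)) (π / 2) :=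
    Ioo_critAngle_subset hb (hbnd s hs)
  have hθanti : StrictAntiOn θ I := strictAntiOn_of_hasDerivAt_neg hI.convex hθ fun t ht ↦
    have htI := interior_subset ht
    neg_of_mul_add_rhsPoly_eq_zero hb (hzpos t htI) (critCos_lt_cos hb (hbnd t htI)) (hW' t htI)
  have hsin (s : ℝ) (hs : s ∈ I) (hs0 : 0 < s) : sin (θ s) < 0 :=
    sin_neg_of_neg_of_neg_pi_lt (by simpa [hθ0] using hθanti hI0 hs hs0)
      (by linarith [(hhalf s hs).1, pi_pos])
  refine ⟨fun s hs ↦ ⟨(cos_pos_of_mem_Ioo (hhalf s hs)).ne', hhalf s hs⟩, hθanti, ?_, ?_⟩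
  · refine strictAntiOn_of_hasDerivAt_neg (hI.convex.inter (convex_Ici 0)) (fun t ht ↦ hz t ht.1)
      fun t ht ↦ hsin t (interior_subset ht).1 ?_
    simpa using interior_mono inter_subset_right ht
  · by_cases hpos : ∃ s₀ ∈ I, 0 < s₀
    · obtain ⟨s₀, hs₀, hs₀pos⟩ := hpos
      refine bddAbove_of_pos_of_deriv_le_neg_s11 hI hs₀ (neg_pos.2 (hsin s₀ hs₀ hs₀pos)) hz
        (fun t ht hs₀t ↦ ?_) hzpos
      rw [neg_neg]
      exact sin_le_sin_of_le_of_le_pi_div_two (hhalf t ht).1.le (hhalf s₀ hs₀).2.le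
        (hθanti.antitoneOn hs₀ ht hs₀t)
    · push Not at hpos
      exact ⟨0, hpos⟩

/-- Case `2H + bK = 0` with `b ≥ 0`, `θ(0) = 0`: along the generating curve,
`cos θ ≠ 0` (so `-π/2 < θ < π/2`), `θ` is strictly decreasing, `z` is strictly
decreasing for `s > 0`, and the maximal positive time of existence is finite. -/
theorem stmt11 (b : ℝ) (θ x z θd : ℝ → ℝ) (I : Set ℝ)
    (hI : I.OrdConnected) (hIopen : IsOpen I) (hI0 : (0 : ℝ) ∈ I)
    (hx : ∀ s ∈ I, HasDerivAt x (Real.cos (θ s)) s)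
    (hz : ∀ s ∈ I, HasDerivAt z (Real.sin (θ s)) s)
    (hθ : ∀ s ∈ I, HasDerivAt θ (θd s) s)
    (hzpos : ∀ s ∈ I, 0 < z s)
    (hW : ∀ s ∈ I, (1 + b * Real.cos (θ s)) * z s * θd s
      + 2 * Real.cos (θ s) - b * Real.sin (θ s) ^ 2 = 0)
    (hθ0 : θ 0 = 0) (hb : 0 ≤ b)
    (hmax : ∀ (J : Set ℝ) (θ₂ x₂ z₂ θd₂ : ℝ → ℝ),
      J.OrdConnected → IsOpen J → I ⊆ J →
      (∀ s ∈ I, θ₂ s = θ s ∧ x₂ s = x s ∧ z₂ s = z s) →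
      (∀ s ∈ J, HasDerivAt x₂ (Real.cos (θ₂ s)) s ∧
        HasDerivAt z₂ (Real.sin (θ₂ s)) s ∧ HasDerivAt θ₂ (θd₂ s) s ∧
        0 < z₂ s ∧ (1 + b * Real.cos (θ₂ s)) * z₂ s * θd₂ s
          + 2 * Real.cos (θ₂ s) - b * Real.sin (θ₂ s) ^ 2 = 0) →
      J ⊆ I) :
    (∀ s ∈ I, Real.cos (θ s) ≠ 0 ∧ -(π / 2) < θ s ∧ θ s < π / 2) ∧
    StrictAntiOn θ I ∧
    StrictAntiOn z (I ∩ Ici 0) ∧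
    BddAbove I :=
  stmt11_general b θ z θd I hI hI0 hz hθ hzpos hW hθ0 hb
end

section
/- Let a, b ∈ ℝ with b ≠ 0 and a² + 4b² + 4b = 0. If θ, x, z solve x' = cos θ, z' = sin θ, z > 0, and (a/2 + b cos θ)·z·θ' + a cos θ − b sin²θ = 1 for all s, then the relation simplifies to −2b z θ' = a + 2b cos θ, differentiation gives z θ'' = 0, hence θ' is constant and the generating curve is a straight line or a Euclidean circle. -/
open Real

/-- Case `aH + bK = 1` with `a² + 4b² + 4b = 0`, `b ≠ 0`: the Weingarten
relation reduces to `-2b z θ' = a + 2b cos θ`, differentiation gives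
`z θ'' = 0`, hence `θ'` is constant and the generating curve is a straight
line or a Euclidean circle. -/
theorem stmt12 (a b : ℝ) (hb : b ≠ 0) (hab : a ^ 2 + 4 * b ^ 2 + 4 * b = 0)
    (θ x z θd θdd : ℝ → ℝ)
    (hx : ∀ s, HasDerivAt x (Real.cos (θ s)) s)
    (hz : ∀ s, HasDerivAt z (Real.sin (θ s)) s)
    (hθ : ∀ s, HasDerivAt θ (θd s) s)
    (hθd : ∀ s, HasDerivAt θd (θdd s) s)
    (hzpos : ∀ s, 0 < z s)
    (hW : ∀ s, (a / 2 + b * Real.cos (θ s)) * z s * θd s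
      + a * Real.cos (θ s) - b * Real.sin (θ s) ^ 2 = 1) :
    (∀ s, -2 * b * z s * θd s = a + 2 * b * Real.cos (θ s)) ∧
    (∀ s, z s * θdd s = 0) ∧
    (∀ s t, θd s = θd t) := by
  -- Key pointwise identity from the Weingarten relation
  have key : ∀ s, (a + 2*b*Real.cos (θ s)) *
      (2*b*z s*θd s + a + 2*b*Real.cos (θ s)) = 0 := by
    intro s
    have h1 := hW s
    have h2 := Real.sin_sq_add_cos_sq (θ s)
    linear_combination (4*b) * h1 + hab + (4*b^2) * h2
  -- The main pointwise relation
  have hv0 : ∀ s, 2*b*z s*θd s + (a + 2*b*Real.cos (θ s)) = 0 := by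
    intro s0
    by_contra hne
    have hvcont : Continuous (fun s => 2*b*z s*θd s + (a + 2*b*Real.cos (θ s))) := by
      have hzc : Continuous z := Differentiable.continuous (fun s => (hz s).differentiableAt : Differentiable ℝ z)
      have hθdc : Continuous θd := Differentiable.continuous (fun s => (hθd s).differentiableAt : Differentiable ℝ θd)
      have hθc : Continuous θ := Differentiable.continuous (fun s => (hθ s).differentiableAt : Differentiable ℝ θ)
      exact ((continuous_const.mul hzc).mul hθdc).add
        (continuous_const.add (continuous_const.mul (Real.continuous_cos.comp hθc)))
    have hev : ∀ᶠ s in nhds s0, 2*b*z s*θd s + (a + 2*b*Real.cos (θ s)) ≠ 0 :=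
      hvcont.continuousAt.eventually_ne hne
    have hg : ∀ᶠ s in nhds s0, Real.cos (θ s) = -a/(2*b) := by
      filter_upwards [hev] with s hs
      rcases mul_eq_zero.1 (key s) with h | h
      · field_simp
        linarith
      · exact absurd (by linarith : 2*b*z s*θd s + (a + 2*b*Real.cos (θ s)) = 0) hs
    have hgs0 : Real.cos (θ s0) = -a/(2*b) := hg.self_of_nhds
    -- derivative of cos ∘ θ at s0 is 0 since it is locally constant
    have hd1 : HasDerivAt (fun s => Real.cos (θ s)) (-Real.sin (θ s0) * θd s0) s0 :=
      (hθ s0).cos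
    have hd2 : HasDerivAt (fun s => Real.cos (θ s)) 0 s0 :=
      (Filter.EventuallyEq.hasDerivAt_iff hg).mpr (hasDerivAt_const s0 (-a/(2*b)))
    have hsin0 : Real.sin (θ s0) * θd s0 = 0 := by
      have := hd1.unique hd2; linarith
    have hθd0 : θd s0 = 0 := by
      by_cases hs0 : Real.sin (θ s0) = 0
      · -- then sin ∘ θ is locally 0, so cos θ s0 * θd s0 = 0 with cos² = 1
        have hcos2 : Real.cos (θ s0) ^ 2 = 1 := by
          have := Real.sin_sq_add_cos_sq (θ s0)
          nlinarith
        have hsinloc : ∀ᶠ s in nhds s0, Real.sin (θ s) = 0 := by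
          filter_upwards [hg] with s hs
          have h2 := Real.sin_sq_add_cos_sq (θ s)
          have hcc : Real.cos (θ s) = Real.cos (θ s0) := by rw [hs, hgs0]
          rw [hcc] at h2
          have h3 : Real.sin (θ s) ^ 2 = 0 := by linarith
          exact pow_eq_zero_iff (two_ne_zero).elim |>.mp h3
        have hd3 : HasDerivAt (fun s => Real.sin (θ s)) (Real.cos (θ s0) * θd s0) s0 :=
          (hθ s0).sin
        have hd4 : HasDerivAt (fun s => Real.sin (θ s)) 0 s0 :=
          (Filter.EventuallyEq.hasDerivAt_iff hsinloc).mpr (hasDerivAt_const s0 0)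
        have h5 := hd3.unique hd4
        have hcne : Real.cos (θ s0) ≠ 0 := by
          intro h; rw [h] at hcos2; norm_num at hcos2
        exact (mul_eq_zero.1 h5).resolve_left hcne
      · exact (mul_eq_zero.1 hsin0).resolve_left hs0
    apply hne
    rw [hθd0, hgs0]
    field_simp
    ring
  have h2b : (2:ℝ)*b ≠ 0 := by simpa using hb
  refine ⟨fun s => by have := hv0 s; linarith, ?_, ?_⟩
  · -- differentiate the relation
    intro s
    have hdL : HasDerivAt (fun s => 2*b*(z s*θd s))
        (2*b*(Real.sin (θ s) * θd s + z s * θdd s)) s :=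
      ((hz s).mul (hθd s)).const_mul (2*b)
    have heq : (fun s => 2*b*(z s*θd s)) = fun s => -(a + 2*b*Real.cos (θ s)) := by
      funext u
      have := hv0 u
      ring_nf
      ring_nf at this
      linarith
    rw [heq] at hdL
    have hdR : HasDerivAt (fun s => -(a + 2*b*Real.cos (θ s)))
        (-(2*b*(-Real.sin (θ s) * θd s))) s :=
      (((hθ s).cos.const_mul (2*b)).const_add a).neg
    have := hdL.unique hdR
    have h6 : 2*b*(z s * θdd s) = 0 := by linarith [this]
    exact (mul_eq_zero.1 h6).resolve_left h2b
  · -- θd is constant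
    have hdd : ∀ u, θdd u = 0 := by
      intro u
      have h6 : 2*b*(z u * θdd u) = 0 := by
        have hdL : HasDerivAt (fun s => 2*b*(z s*θd s))
            (2*b*(Real.sin (θ u) * θd u + z u * θdd u)) u :=
          ((hz u).mul (hθd u)).const_mul (2*b)
        have heq : (fun s => 2*b*(z s*θd s)) = fun s => -(a + 2*b*Real.cos (θ s)) := by
          funext w
          have := hv0 w
          ring_nf
          ring_nf at this
          linarith
        rw [heq] at hdL
        have hdR : HasDerivAt (fun s => -(a + 2*b*Real.cos (θ s)))
            (-(2*b*(-Real.sin (θ u) * θd u))) u :=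
          (((hθ u).cos.const_mul (2*b)).const_add a).neg
        have := hdL.unique hdR
        linarith
      have h7 := (mul_eq_zero.1 h6).resolve_left h2b
      have := (hzpos u).ne'
      exact (mul_eq_zero.1 h7).resolve_left this
    intro s t
    exact is_const_of_deriv_eq_zero (fun u => (hθd u).differentiableAt)
      (fun u => by rw [(hθd u).deriv]; exact hdd u) s t
end

section
/- Let θ, x, z solve x' = cos θ, z' = sin θ, z > 0, with θ'(s) = 2(1 − a cos θ(s) + b sin²θ(s)) / (z(s)(a + 2b cos θ(s))), θ(0) = 0, a = 1. Then θ ≡ 0, so z is constant and the surface is a horosphere. -/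
/-!
Near a zero `s₀` of `θ` the denominator `z (1 + 2b cos θ)` stays away from `0`, because
`z(s₀) > 0` and `1 + 2b ≠ 0`, while the numerator factors as
`(1 - cos θ)(1 + b(1 + cos θ)) = O(|θ|)`. Hence `|θ'| ≤ K |θ|` near every zero of `θ`, so by
Grönwall's inequality (forwards and backwards in time) the zero set of `θ` is open. It is also
closed and contains `0`, so `θ ≡ 0`; then `z' = sin θ = 0` and `z` is constant.
-/

open Real Set Filter Topology

lemma Real.one_sub_cos_le_abs (t : ℝ) : 1 - cos t ≤ |t| := by
  rcases le_or_gt |t| 2 with ht | ht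
  · have := one_sub_sq_div_two_le_cos (x := t)
    nlinarith [sq_abs t, abs_nonneg t]
  · linarith [neg_one_le_cos t]

lemma abs_one_sub_cos_add_mul_sin_sq_le (b t : ℝ) :
    |1 - cos t + b * sin t ^ 2| ≤ (1 + 2 * |b|) * |t| := by
  have hc : 0 ≤ 1 - cos t := by linarith [cos_le_one t]
  have hfactor : 1 - cos t + b * sin t ^ 2 = (1 - cos t) * (1 + b * (1 + cos t)) := by
    rw [sin_sq]; ring
  have hsecond : |1 + b * (1 + cos t)| ≤ 1 + 2 * |b| := by
    have : |1 + cos t| ≤ 2 := abs_le.2 ⟨by linarith [neg_one_le_cos t], by linarith [cos_le_one t]⟩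
    calc |1 + b * (1 + cos t)| ≤ 1 + |b| * |1 + cos t| := by
          simpa [abs_mul] using abs_add_le 1 (b * (1 + cos t))
      _ ≤ 1 + 2 * |b| := by nlinarith [abs_nonneg b]
  rw [hfactor, abs_mul, abs_of_nonneg hc]
  calc (1 - cos t) * |1 + b * (1 + cos t)| ≤ |t| * (1 + 2 * |b|) :=
        mul_le_mul (one_sub_cos_le_abs t) hsecond (abs_nonneg _) (abs_nonneg t)
    _ = (1 + 2 * |b|) * |t| := mul_comm _ _

lemma eventually_eq_zero_of_abs_deriv_le {f f' : ℝ → ℝ} {K s₀ : ℝ}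
    (hf : ∀ s, HasDerivAt f (f' s) s) (hbound : ∀ᶠ s in 𝓝 s₀, |f' s| ≤ K * |f s|)
    (h₀ : f s₀ = 0) : ∀ᶠ s in 𝓝 s₀, f s = 0 := by
  obtain ⟨r, hr, hball⟩ := Metric.eventually_nhds_iff_ball.mp hbound
  have hIcc : Icc (s₀ - r / 2) (s₀ + r / 2) ⊆ Metric.ball s₀ r := fun s hs => by
    rw [Metric.mem_ball, dist_eq, abs_lt]; constructor <;> linarith [hs.1, hs.2]
  have hcont : Continuous f := continuous_iff_continuousAt.2 fun s => (hf s).continuousAt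
  have forward : ∀ s ∈ Icc s₀ (s₀ + r / 2), f s = 0 :=
    eq_zero_of_abs_deriv_le_mul_abs_self_of_eq_zero_right hcont.continuousOn
      (fun s _ => (hf s).hasDerivWithinAt) h₀
      (fun s hs => hball _ (hIcc ⟨by linarith [hs.1], hs.2.le⟩))
  -- Time reversal `u ↦ f (-u)` turns the interval to the left of `s₀` into one to the right.
  have backward : ∀ s ∈ Icc (-s₀) (-s₀ + r / 2), f (-s) = 0 := by
    have hrev : ∀ u, HasDerivAt (fun u => f (-u)) (-f' (-u)) u := fun u => by
      simpa [Function.comp_def] using (hf (-u)).comp u (hasDerivAt_neg u)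
    refine eq_zero_of_abs_deriv_le_mul_abs_self_of_eq_zero_right (K := K)
      (hcont.comp continuous_neg).continuousOn (fun u _ => (hrev u).hasDerivWithinAt)
      (by simpa using h₀) fun u hu => ?_
    simpa using hball _ (hIcc ⟨by linarith [hu.2], by linarith [hu.1]⟩)
  filter_upwards [Icc_mem_nhds (by linarith : s₀ - r / 2 < s₀) (by linarith : s₀ < s₀ + r / 2)]
    with s hs
  rcases le_total s₀ s with h | h
  · exact forward s ⟨h, hs.2⟩
  · simpa using backward (-s) ⟨by linarith, by linarith [hs.1]⟩

lemma eq_zero_of_locally_abs_deriv_le {f f' : ℝ → ℝ} (hf : ∀ s, HasDerivAt f (f' s) s)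
    (hloc : ∀ s₀, f s₀ = 0 → ∃ K, ∀ᶠ s in 𝓝 s₀, |f' s| ≤ K * |f s|) {t₀ : ℝ} (h₀ : f t₀ = 0)
    (s : ℝ) : f s = 0 := by
  have hcont : Continuous f := continuous_iff_continuousAt.2 fun s => (hf s).continuousAt
  have hopen : IsOpen {s | f s = 0} := isOpen_iff_eventually.2 fun s₀ hs₀ => by
    obtain ⟨K, hK⟩ := hloc s₀ hs₀
    exact eventually_eq_zero_of_abs_deriv_le hf hK hs₀
  have hclopen : IsClopen {s | f s = 0} := ⟨isClosed_eq hcont continuous_const, hopen⟩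
  exact eq_univ_iff_forall.mp (hclopen.eq_univ ⟨t₀, h₀⟩) s

theorem stmt13_general (b : ℝ) (hb : 1 + 2 * b ≠ 0) (θ z θd : ℝ → ℝ)
    (hz : ∀ s, HasDerivAt z (Real.sin (θ s)) s)
    (hθ : ∀ s, HasDerivAt θ (θd s) s)
    (hzpos : ∀ s, 0 < z s)
    (hode : ∀ s, θd s = 2 * (1 - 1 * Real.cos (θ s) + b * Real.sin (θ s) ^ 2)
      / (z s * (1 + 2 * b * Real.cos (θ s))))
    (hθ0 : θ 0 = 0) :
    (∀ s, θ s = 0) ∧ (∀ s, z s = z 0) := by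
  have hθ_zero : ∀ s, θ s = 0 := by
    refine eq_zero_of_locally_abs_deriv_le hθ (fun s₀ h₀ => ?_) hθ0
    set den : ℝ → ℝ := fun s => |z s * (1 + 2 * b * cos (θ s))|
    have hcont : Continuous den := by
      have hθc := continuous_iff_continuousAt.2 fun s => (hθ s).continuousAt
      have hzc := continuous_iff_continuousAt.2 fun s => (hz s).continuousAt
      fun_prop
    have hden₀ : 0 < den s₀ := by
      simpa [den, h₀] using abs_pos.2 (mul_ne_zero (hzpos s₀).ne' hb)
    refine ⟨2 * (1 + 2 * |b|) / (den s₀ / 2), ?_⟩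
    filter_upwards [hcont.continuousAt.eventually_const_lt (half_lt_self hden₀)] with s hs
    calc |θd s| = 2 * |1 - cos (θ s) + b * sin (θ s) ^ 2| / den s := by
          rw [hode s, one_mul, abs_div, abs_mul, abs_two]
      _ ≤ 2 * ((1 + 2 * |b|) * |θ s|) / (den s₀ / 2) := by
          gcongr
          exact abs_one_sub_cos_add_mul_sin_sq_le b (θ s)
      _ = 2 * (1 + 2 * |b|) / (den s₀ / 2) * |θ s| := by ring
  refine ⟨hθ_zero, fun s => is_const_of_deriv_eq_zero (hz · |>.differentiableAt) (fun t => ?_) s 0⟩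
  simpa [hθ_zero t] using (hz t).deriv

/-- Case `H + bK = 1` (`a = 1`), `θ(0) = 0`, `1 + 2b ≠ 0`: the solution is
`θ ≡ 0`, `z` constant, and the surface is a horosphere. -/
theorem stmt13 (b : ℝ) (hb : 1 + 2 * b ≠ 0) (θ x z θd : ℝ → ℝ)
    (hx : ∀ s, HasDerivAt x (Real.cos (θ s)) s)
    (hz : ∀ s, HasDerivAt z (Real.sin (θ s)) s)
    (hθ : ∀ s, HasDerivAt θ (θd s) s)
    (hzpos : ∀ s, 0 < z s)
    (hode : ∀ s, θd s = 2 * (1 - 1 * Real.cos (θ s) + b * Real.sin (θ s) ^ 2)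
      / (z s * (1 + 2 * b * Real.cos (θ s))))
    (hθ0 : θ 0 = 0) :
    (∀ s, θ s = 0) ∧ (∀ s, z s = z 0) :=
  stmt13_general b hb θ z θd hz hθ hzpos hode hθ0
end

section
/- Let θ, x, z solve x' = cos θ, z' = sin θ, z > 0, with (a/2 + b cos θ)·z·θ' + a cos θ − b sin²θ = 1, θ(0) = 0, a > 1 and a + 2b < 0. Then a + 2b cos θ(s) < 0 for all s, hence cos θ(s) > −a/(2b) > 0, so −π/2 < θ(s) < π/2 and the generating curve is a graph over the x-axis; moreover θ is strictly increasing and z is strictly increasing for s > 0, so the graph is strictly convex. -/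
open Real Set

/-- Case `aH + bK = 1` with `a > 1` and `a + 2b < 0`, `θ(0) = 0`: one has
`a + 2b cos θ(s) < 0`, hence `cos θ(s) > -a/(2b) > 0`, so
`-π/2 < θ(s) < π/2` and the generating curve is a graph over the `x`-axis;
moreover `θ` is strictly increasing and `z` is strictly increasing for
`s > 0`, so the graph is strictly convex. -/
theorem stmt14 (a b : ℝ) (θ x z θd : ℝ → ℝ) (I : Set ℝ)
    (hI : I.OrdConnected) (hI0 : (0 : ℝ) ∈ I)
    (hx : ∀ s ∈ I, HasDerivAt x (Real.cos (θ s)) s)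
    (hz : ∀ s ∈ I, HasDerivAt z (Real.sin (θ s)) s)
    (hθ : ∀ s ∈ I, HasDerivAt θ (θd s) s)
    (hzpos : ∀ s ∈ I, 0 < z s)
    (hW : ∀ s ∈ I, (a / 2 + b * Real.cos (θ s)) * z s * θd s
      + a * Real.cos (θ s) - b * Real.sin (θ s) ^ 2 = 1)
    (hθ0 : θ 0 = 0) (ha : 1 < a) (hab : a + 2 * b < 0) :
    (∀ s ∈ I, a + 2 * b * Real.cos (θ s) < 0 ∧
      -a / (2 * b) < Real.cos (θ s) ∧ 0 < -a / (2 * b) ∧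
      -(π / 2) < θ s ∧ θ s < π / 2) ∧
    StrictMonoOn θ I ∧
    StrictMonoOn z (I ∩ Ici 0) := by
  have hb : b < 0 := by linarith
  -- nonvanishing
  have hne : ∀ s ∈ I, a + 2 * b * Real.cos (θ s) ≠ 0 := by
    intro s hs h0
    have h1 := hW s hs
    have h2 : Real.sin (θ s) ^ 2 = 1 - Real.cos (θ s) ^ 2 := by
      have := Real.sin_sq_add_cos_sq (θ s); linarith
    rw [h2] at h1
    have h3 : a / 2 + b * Real.cos (θ s) = 0 := by linarith
    rw [h3] at h1
    nlinarith [sq_nonneg (2 * b + 1), sq_nonneg (Real.cos (θ s)), h0, h1]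
  -- key sign
  have key : ∀ s ∈ I, a + 2 * b * Real.cos (θ s) < 0 := by
    intro s hs
    by_contra h
    push_neg at h
    have hpos : 0 < a + 2 * b * Real.cos (θ s) := lt_of_le_of_ne h (Ne.symm (hne s hs))
    have hsub : uIcc (0 : ℝ) s ⊆ I := hI.uIcc_subset hI0 hs
    have hcont : ContinuousOn (fun t => a + 2 * b * Real.cos (θ t)) (uIcc (0 : ℝ) s) := by
      intro t ht
      exact (continuousAt_const.add (continuousAt_const.mul
        (Real.continuous_cos.continuousAt.comp (hθ t (hsub ht)).continuousAt))).continuousWithinAt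
    have hiv := intermediate_value_uIcc hcont
    have h0m : (0 : ℝ) ∈ uIcc (a + 2 * b * Real.cos (θ 0)) (a + 2 * b * Real.cos (θ s)) := by
      rw [hθ0, Real.cos_zero]
      exact mem_uIcc.2 (Or.inl ⟨by linarith, hpos.le⟩)
    obtain ⟨t, ht, ht0⟩ := hiv h0m
    exact hne t (hsub ht) ht0
  have hquot : 0 < -a / (2 * b) := div_pos_of_neg_of_neg (by linarith) (by linarith)
  have hcos : ∀ s ∈ I, -a / (2 * b) < Real.cos (θ s) := by
    intro s hs
    rw [div_lt_iff_of_neg (by linarith : 2 * b < 0)]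
    nlinarith [key s hs]
  have hcpos : ∀ s ∈ I, 0 < Real.cos (θ s) := fun s hs => hquot.trans (hcos s hs)
  -- θ bounds via IVT
  have hbd : ∀ s ∈ I, -(π / 2) < θ s ∧ θ s < π / 2 := by
    intro s hs
    have hsub : uIcc (0 : ℝ) s ⊆ I := hI.uIcc_subset hI0 hs
    have hcont : ContinuousOn θ (uIcc (0 : ℝ) s) := fun t ht =>
      (hθ t (hsub ht)).continuousAt.continuousWithinAt
    have hiv := intermediate_value_uIcc hcont
    have hpi : (0 : ℝ) < π / 2 := by positivity
    constructor
    · by_contra h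
      push_neg at h
      have h0m : -(π / 2) ∈ uIcc (θ 0) (θ s) := by
        rw [hθ0]
        exact mem_uIcc.2 (Or.inr ⟨h, by linarith⟩)
      obtain ⟨t, ht, ht0⟩ := hiv h0m
      have := hcpos t (hsub ht)
      rw [ht0, Real.cos_neg, Real.cos_pi_div_two] at this
      exact lt_irrefl 0 this
    · by_contra h
      push_neg at h
      have h0m : π / 2 ∈ uIcc (θ 0) (θ s) := by
        rw [hθ0]
        exact mem_uIcc.2 (Or.inl ⟨by linarith, h⟩)
      obtain ⟨t, ht, ht0⟩ := hiv h0m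
      have := hcpos t (hsub ht)
      rw [ht0, Real.cos_pi_div_two] at this
      exact lt_irrefl 0 this
  -- θd positive
  have hθd : ∀ s ∈ I, 0 < θd s := by
    intro s hs
    have h1 := hW s hs
    have h2 : Real.sin (θ s) ^ 2 = 1 - Real.cos (θ s) ^ 2 := by
      have := Real.sin_sq_add_cos_sq (θ s); linarith
    rw [h2] at h1
    set c := Real.cos (θ s) with hc
    have hf : a + 2 * b * c < 0 := key s hs
    have hc1 : c ≤ 1 := Real.cos_le_one _
    have hnum : 1 - a * c + b * (1 - c ^ 2) < 0 := by
      nlinarith [sq_nonneg (c - 1), mul_nonneg (sub_nonneg.2 hc1) (neg_nonneg.2 hf.le)]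
    have hden : (a / 2 + b * c) * z s < 0 :=
      mul_neg_of_neg_of_pos (by linarith) (hzpos s hs)
    have heq : (a / 2 + b * c) * z s * θd s = 1 - a * c + b * (1 - c ^ 2) := by linarith
    by_contra h
    push_neg at h
    have : 0 ≤ (a / 2 + b * c) * z s * θd s := by
      nlinarith [mul_nonneg (neg_nonneg.2 hden.le) (neg_nonneg.2 h)]
    linarith
  have hconv : Convex ℝ I := by
    rw [convex_iff_ordConnected]; exact hI
  have hmθ : StrictMonoOn θ I := by
    apply strictMonoOn_of_deriv_pos hconv
    · exact fun t ht => (hθ t ht).continuousAt.continuousWithinAt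
    · intro t ht
      have ht' : t ∈ I := interior_subset ht
      rw [(hθ t ht').deriv]
      exact hθd t ht'
  refine ⟨fun s hs => ⟨key s hs, hcos s hs, hquot, (hbd s hs).1, (hbd s hs).2⟩, hmθ, ?_⟩
  apply strictMonoOn_of_deriv_pos (hconv.inter (convex_Ici 0))
  · exact fun t ht => (hz t ht.1).continuousAt.continuousWithinAt
  · intro t ht
    rw [interior_inter, interior_Ici] at ht
    obtain ⟨ht1, ht2⟩ := ht
    have htI : t ∈ I := interior_subset ht1
    have htpos : 0 < t := ht2
    rw [(hz t htI).deriv]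
    have hθt : 0 < θ t := by
      have := hmθ hI0 htI htpos
      rwa [hθ0] at this
    have hlt : θ t < π := lt_trans (hbd t htI).2 (by linarith [Real.pi_pos])
    exact Real.sin_pos_of_pos_of_lt_pi hθt hlt
end
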